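/- arXiv:1809.06721 — 7 statements merged into one kernel-verified Lean document; each statement's English description precedes it below -/
import Mathlib

section
/- Let E be a centered A-A-bimodule. Then there exists a unique A-A-bimodule isomorphism σ : E ⊗_A E → E ⊗_A E such that σ(ω ⊗ η) = η ⊗ ω for all ω, η ∈ Z(E), and moreover σ² = id. -/
open MulOpposite

/-- Auxiliary: induction principle for centered bimodules. -/
theorem centered_span_induction
    {A E : Type*} [Ring A] [AddCommGroup E] [Module A E] [Module Aᵐᵒᵖ E]
    (hcent : Submodule.span Aᵐᵒᵖ {e : E | ∀ b : A, b • e = op b • e} = ⊤)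
    (p : E → Prop)
    (hz : ∀ z, (∀ b : A, b • z = op b • z) → p z)
    (h0 : p 0)
    (hadd : ∀ x y, p x → p y → p (x + y))
    (hsmul : ∀ (b : A) (x), p x → p (op b • x)) :
    ∀ e, p e := by
  intro e
  have he : e ∈ Submodule.span Aᵐᵒᵖ {e : E | ∀ b : A, b • e = op b • e} := by
    rw [hcent]; trivial
  exact Submodule.span_induction (p := fun x _ => p x) (fun x h => hz x h) h0
    (fun x y _ _ hx hy => hadd x y hx hy)
    (fun a x _ hx => by simpa using hsmul a.unop x hx) he

/-- Auxiliary: existence of the "pre-flip" pairing `Λ` on a centered bimodule, with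
`Λ z f = tmul f z` for central `z`. -/
theorem exists_preflip
    {A E T : Type*} [Ring A] [AddCommGroup E] [Module A E] [Module Aᵐᵒᵖ E]
    [SMulCommClass A Aᵐᵒᵖ E]
    [AddCommGroup T] [Module A T] [Module Aᵐᵒᵖ T] [SMulCommClass A Aᵐᵒᵖ T]
    (hcent : Submodule.span Aᵐᵒᵖ {e : E | ∀ b : A, b • e = op b • e} = ⊤)
    (tmul : E → E → T)
    (htl : ∀ e e' f : E, tmul (e + e') f = tmul e f + tmul e' f)
    (htr : ∀ e f f' : E, tmul e (f + f') = tmul e f + tmul e f')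
    (htbal : ∀ (a : A) (e f : E), tmul (op a • e) f = tmul e (a • f))
    (htAop : ∀ (a : A) (e f : E), op a • tmul e f = tmul e (op a • f)) :
    ∃ Λ : E → E → T,
      (∀ e e' f, Λ (e + e') f = Λ e f + Λ e' f) ∧
      (∀ e f f', Λ e (f + f') = Λ e f + Λ e f') ∧
      (∀ (b : A) (e f), Λ (op b • e) f = Λ e (b • f)) ∧
      (∀ (b : A) (e f), Λ e (op b • f) = op b • Λ e f) ∧
      (∀ z, (∀ b : A, b • z = op b • z) → ∀ f, Λ z f = tmul f z) := by
  classical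
  have t0r : ∀ e, tmul e 0 = 0 := by
    intro e
    have h := htr e 0 0
    rw [add_zero] at h
    exact (left_eq_add.mp h)
  -- index type: pairs (a, z) with z central, representing `op a • z`
  set Zt := {z : E // ∀ b : A, b • z = op b • z} with hZt
  set π : ((A × Zt) →₀ ℤ) →+ E :=
    Finsupp.liftAddHom (fun p => zmultiplesHom E (op p.1 • p.2.val)) with hπdef
  have hπ : ∀ (p : A × Zt) (n : ℤ), π (Finsupp.single p n) = n • (op p.1 • p.2.val) := by
    intro p n
    rw [hπdef, Finsupp.liftAddHom_apply_single, zmultiplesHom_apply]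
  set Lf : A × Zt → E →+ T := fun p =>
    AddMonoidHom.mk' (fun f => tmul (p.1 • f) p.2.val)
      (by intro f f'
          show tmul (p.1 • (f + f')) p.2.val = tmul (p.1 • f) p.2.val + tmul (p.1 • f') p.2.val
          rw [smul_add, htl]) with hLfdef
  set L : ((A × Zt) →₀ ℤ) →+ (E →+ T) :=
    Finsupp.liftAddHom (fun p => zmultiplesHom (E →+ T) (Lf p)) with hLdef
  have hL : ∀ (p : A × Zt) (n : ℤ) (f : E),
      L (Finsupp.single p n) f = n • tmul (p.1 • f) p.2.val := by
    intro p n f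
    rw [hLdef, Finsupp.liftAddHom_apply_single, zmultiplesHom_apply]
    rfl
  -- evaluation homs
  set ev : E → (E →+ T) →+ T := fun f => AddMonoidHom.mk' (fun g => g f)
    (fun g g' => rfl) with hevdef
  have hev : ∀ (f : E) (g : E →+ T), ev f g = g f := fun _ _ => rfl
  set sOpT : A → T →+ T := fun b => AddMonoidHom.mk' (fun t => op b • t)
    (fun x y => smul_add _ x y) with hsOpT
  set sOpE : A → E →+ E := fun b => AddMonoidHom.mk' (fun x => op b • x)
    (fun x y => smul_add _ x y) with hsOpE
  -- L intertwines `op b •` on the second argument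
  have hLop : ∀ (b : A) (x) (f : E), L x (op b • f) = op b • L x f := by
    intro b x f
    have key : (ev (op b • f)).comp L = (sOpT b).comp ((ev f).comp L) := by
      apply Finsupp.addHom_ext
      intro p n
      show L (Finsupp.single p n) (op b • f) = op b • (L (Finsupp.single p n) f)
      rw [hL, hL]
      calc n • tmul (p.1 • op b • f) p.2.val
          = n • tmul (op b • p.1 • f) p.2.val := by rw [smul_comm]
        _ = n • tmul (p.1 • f) (b • p.2.val) := by rw [htbal]
        _ = n • tmul (p.1 • f) (op b • p.2.val) := by rw [p.2.prop b]
        _ = n • (op b • tmul (p.1 • f) p.2.val) := by rw [htAop]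
        _ = op b • n • tmul (p.1 • f) p.2.val := (smul_comm _ _ _).symm
    exact DFunLike.congr_fun key x
  -- evaluation at a central element factors through π
  have keyw : ∀ (w : E), (∀ b : A, b • w = op b • w) → ∀ x, L x w = tmul w (π x) := by
    intro w hw x
    have key : (ev w).comp L =
        (AddMonoidHom.mk' (tmul w) (htr w)).comp π := by
      apply Finsupp.addHom_ext
      intro p n
      show L (Finsupp.single p n) w = (AddMonoidHom.mk' (tmul w) (htr w)) (π (Finsupp.single p n))
      rw [hL, hπ, AddMonoidHom.map_zsmul]
      show n • tmul (p.1 • w) p.2.val = n • tmul w (op p.1 • p.2.val)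
      rw [hw p.1, htbal, p.2.prop p.1]
    exact DFunLike.congr_fun key x
  -- well-definedness key
  have hker : ∀ x, π x = 0 → ∀ f, L x f = 0 := by
    intro x hx
    refine centered_span_induction hcent (fun f => L x f = 0) ?_ ?_ ?_ ?_
    · intro z hz
      rw [keyw z hz x, hx, t0r]
    · exact (L x).map_zero
    · intro u v hu hv
      rw [(L x).map_add, hu, hv, add_zero]
    · intro b u hu
      rw [hLop, hu, smul_zero]
  have hLeq : ∀ x y, π x = π y → ∀ f, L x f = L y f := by
    intro x y h f
    have h2 : π (x - y) = 0 := by rw [map_sub, h, sub_self]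
    have h3 := hker (x - y) h2 f
    rw [map_sub, AddMonoidHom.sub_apply, sub_eq_zero] at h3
    exact h3
  -- left multiplication on the free module
  set mapL : A → ((A × Zt) →₀ ℤ) →+ ((A × Zt) →₀ ℤ) := fun b =>
    Finsupp.liftAddHom (fun p => zmultiplesHom _ (Finsupp.single ((p.1 * b, p.2) : A × Zt) (1 : ℤ)))
    with hmapLdef
  have hmapL : ∀ (b : A) (p : A × Zt) (n : ℤ),
      mapL b (Finsupp.single p n) = Finsupp.single ((p.1 * b, p.2) : A × Zt) n := by
    intro b p n
    rw [hmapLdef, Finsupp.liftAddHom_apply_single, zmultiplesHom_apply,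
      Finsupp.smul_single, smul_eq_mul, mul_one]
  have hπmapL : ∀ (b : A) (x), π (mapL b x) = op b • π x := by
    intro b x
    have key : π.comp (mapL b) = (sOpE b).comp π := by
      apply Finsupp.addHom_ext
      intro p n
      show π (mapL b (Finsupp.single p n)) = op b • π (Finsupp.single p n)
      rw [hmapL, hπ, hπ, smul_comm (op b) n, smul_smul, ← op_mul]
    exact DFunLike.congr_fun key x
  have hLmapL : ∀ (b : A) (x) (f : E), L (mapL b x) f = L x (b • f) := by
    intro b x f
    have key : ((ev f).comp L).comp (mapL b) = (ev (b • f)).comp L := by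
      apply Finsupp.addHom_ext
      intro p n
      show L (mapL b (Finsupp.single p n)) f = L (Finsupp.single p n) (b • f)
      rw [hmapL, hL, hL, mul_smul]
    exact DFunLike.congr_fun key x
  -- a set-theoretic section of π
  have hsec : ∀ e : E, ∃ x, π x = e := by
    refine centered_span_induction hcent (fun e => ∃ x, π x = e) ?_ ?_ ?_ ?_
    · intro z hz
      refine ⟨Finsupp.single ((1 : A), ⟨z, hz⟩) 1, ?_⟩
      rw [hπ]
      simp
    · exact ⟨0, map_zero π⟩
    · rintro u v ⟨x, hx⟩ ⟨y, hy⟩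
      exact ⟨x + y, by rw [map_add, hx, hy]⟩
    · rintro b u ⟨x, hx⟩
      exact ⟨mapL b x, by rw [hπmapL, hx]⟩
  choose s hs using hsec
  refine ⟨fun e f => L (s e) f, ?_, ?_, ?_, ?_, ?_⟩
  · intro e e' f
    show L (s (e + e')) f = L (s e) f + L (s e') f
    have : L (s (e + e')) f = L (s e + s e') f := by
      apply hLeq
      rw [map_add, hs, hs, hs]
    rw [this, map_add, AddMonoidHom.add_apply]
  · intro e f f'
    exact (L (s e)).map_add f f'
  · intro b e f
    show L (s (op b • e)) f = L (s e) (b • f)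
    have : L (s (op b • e)) f = L (mapL b (s e)) f := by
      apply hLeq
      rw [hπmapL, hs, hs]
    rw [this, hLmapL]
  · intro b e f
    exact hLop b (s e) f
  · intro z hz f
    show L (s z) f = tmul f z
    have : L (s z) f = L (Finsupp.single ((1 : A), (⟨z, hz⟩ : Zt)) 1) f := by
      apply hLeq
      rw [hs, hπ]
      simp
    rw [this, hL, one_smul, one_smul]

/-- Let `E` be a centered `A`-`A`-bimodule.  Then there exists a unique
`A`-`A`-bimodule isomorphism `σ : E ⊗_A E → E ⊗_A E` such that `σ(ω ⊗ η) = η ⊗ ω` for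
all `ω, η ∈ Z(E)`, and moreover `σ² = id`.  Here `T` together with the balanced
biadditive map `tmul` satisfying the universal property plays the role of the balanced
tensor product `E ⊗_A E` with its natural `A`-`A`-bimodule structure. -/
theorem canonical_flip_exists_unique
    {A E T : Type*} [Ring A] [AddCommGroup E] [Module A E] [Module Aᵐᵒᵖ E]
    [SMulCommClass A Aᵐᵒᵖ E]
    [AddCommGroup T] [Module A T] [Module Aᵐᵒᵖ T] [SMulCommClass A Aᵐᵒᵖ T]
    (hcent : Submodule.span Aᵐᵒᵖ {e : E | ∀ b : A, b • e = op b • e} = ⊤)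
    (tmul : E → E → T)
    (htl : ∀ e e' f : E, tmul (e + e') f = tmul e f + tmul e' f)
    (htr : ∀ e f f' : E, tmul e (f + f') = tmul e f + tmul e f')
    (htbal : ∀ (a : A) (e f : E), tmul (op a • e) f = tmul e (a • f))
    (htA : ∀ (a : A) (e f : E), a • tmul e f = tmul (a • e) f)
    (htAop : ∀ (a : A) (e f : E), op a • tmul e f = tmul e (op a • f))
    (huniv : ∀ (P : Type*) [AddCommGroup P] (φ : E → E → P),
      (∀ e e' f : E, φ (e + e') f = φ e f + φ e' f) →
      (∀ e f f' : E, φ e (f + f') = φ e f + φ e f') →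
      (∀ (a : A) (e f : E), φ (op a • e) f = φ e (a • f)) →
      ∃! Φ : T →+ P, ∀ e f : E, Φ (tmul e f) = φ e f) :
    ∃ σ : T ≃+ T,
      ((∀ (a : A) (x : T), σ (a • x) = a • σ x) ∧
       (∀ (a : A) (x : T), σ (op a • x) = op a • σ x) ∧
       (∀ ω η : E, (∀ b : A, b • ω = op b • ω) → (∀ b : A, b • η = op b • η) →
          σ (tmul ω η) = tmul η ω) ∧
       (∀ x : T, σ (σ x) = x)) ∧
      (∀ τ : T ≃+ T,
        ((∀ (a : A) (x : T), τ (a • x) = a • τ x) ∧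
         (∀ (a : A) (x : T), τ (op a • x) = op a • τ x) ∧
         (∀ ω η : E, (∀ b : A, b • ω = op b • ω) → (∀ b : A, b • η = op b • η) →
            τ (tmul ω η) = tmul η ω)) → τ = σ) := by
  classical
  obtain ⟨Λ, hΛa1, hΛa2, hΛbal, hΛop, hΛz⟩ :=
    exists_preflip hcent tmul htl htr htbal htAop
  have t0r : ∀ e, tmul e 0 = 0 := by
    intro e
    have h := htr e 0 0
    rw [add_zero] at h
    exact left_eq_add.mp h
  have t0l : ∀ f, tmul 0 f = 0 := by
    intro f
    have h := htl 0 0 f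
    rw [add_zero] at h
    exact left_eq_add.mp h
  have hΛ0l : ∀ f, Λ 0 f = 0 := by
    intro f
    have h := hΛa1 0 0 f
    rw [add_zero] at h
    exact left_eq_add.mp h
  -- left A-action compatibility of Λ
  have hΛA : ∀ (a : A) (e f), Λ (a • e) f = a • Λ e f := by
    intro a
    refine centered_span_induction hcent (fun e => ∀ f, Λ (a • e) f = a • Λ e f) ?_ ?_ ?_ ?_
    · intro z hz f
      rw [hz a, hΛbal, hΛz z hz, hΛz z hz, htA]
    · intro f
      rw [smul_zero, hΛ0l, smul_zero]
    · intro x y hx hy f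
      rw [smul_add, hΛa1, hΛa1, hx f, hy f, smul_add]
    · intro b x hx f
      rw [smul_comm, hΛbal, hx (b • f), hΛbal]
  -- swapped version on central second argument
  have hΛswap : ∀ z, (∀ b : A, b • z = op b • z) → ∀ f, Λ f z = tmul z f := by
    intro z hz
    refine centered_span_induction hcent (fun f => Λ f z = tmul z f) ?_ ?_ ?_ ?_
    · intro w hw
      exact hΛz w hw z
    · show Λ 0 z = tmul z 0
      rw [hΛ0l, t0r]
    · intro x y hx hy
      rw [hΛa1, htr, hx, hy]
    · intro b x hx
      rw [hΛbal, hz b, hΛop, hx, htAop]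
  -- T is generated as an abelian group by the elementary tensors
  set S : Set T := {t | ∃ e f, tmul e f = t} with hSdef
  have hgen : ∀ t : T, t ∈ AddSubgroup.closure S := by
    by_contra h
    push_neg at h
    obtain ⟨t, ht⟩ := h
    set H := AddSubgroup.closure S with hH
    set q : T →+ T ⧸ H := QuotientAddGroup.mk' H with hq
    have hqt : q t ≠ 0 := by
      intro h0
      exact ht ((QuotientAddGroup.eq_zero_iff t).mp h0)
    obtain ⟨c, hc⟩ := CharacterModule.exists_character_apply_ne_zero_of_ne_zero hqt
    set ψ : T →+ ULift (AddCircle (1 : ℚ)) :=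
      AddMonoidHom.mk' (fun t => ULift.up (c (q t)))
        (by
          intro x y
          show ULift.up (c (q (x + y))) = ULift.up (c (q x)) + ULift.up (c (q y))
          rw [map_add, map_add]
          rfl) with hψ
    obtain ⟨Φ0, hΦ0, hu⟩ := huniv (ULift (AddCircle (1 : ℚ)))
      (fun _ _ => (0 : ULift (AddCircle (1 : ℚ))))
      (by intros; show (0 : ULift (AddCircle (1 : ℚ))) = 0 + 0; rw [add_zero])
      (by intros; show (0 : ULift (AddCircle (1 : ℚ))) = 0 + 0; rw [add_zero])
      (by intros; rfl)
    have h1 : ψ = Φ0 := by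
      apply hu
      intro e f
      show ULift.up (c (q (tmul e f))) = 0
      have : q (tmul e f) = 0 :=
        (QuotientAddGroup.eq_zero_iff (tmul e f)).mpr
          (AddSubgroup.subset_closure ⟨e, f, rfl⟩)
      rw [this, map_zero]
      rfl
    have h2 : (0 : T →+ ULift (AddCircle (1 : ℚ))) = Φ0 := hu _ (fun e f => rfl)
    have h3 : ψ t = 0 := by rw [h1, ← h2]; rfl
    exact hc (congrArg ULift.down h3)
  -- extensionality of additive maps out of T
  have hExt : ∀ (G₁ G₂ : T →+ T), (∀ e f, G₁ (tmul e f) = G₂ (tmul e f)) →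
      ∀ t, G₁ t = G₂ t := by
    intro G₁ G₂ h t
    refine AddSubgroup.closure_induction ?_ ?_ ?_ ?_ (hgen t)
    · rintro x ⟨e, f, rfl⟩
      exact h e f
    · rw [map_zero, map_zero]
    · intro x y _ _ hx hy
      rw [map_add, map_add, hx, hy]
    · intro x _ hx
      rw [map_neg, map_neg, hx]
  -- construction of the flip Φ as an additive map
  set π2 : ((E × E) →₀ ℤ) →+ T :=
    Finsupp.liftAddHom (fun p => zmultiplesHom T (tmul p.1 p.2)) with hπ2def
  have hπ2 : ∀ (p : E × E) (n : ℤ), π2 (Finsupp.single p n) = n • tmul p.1 p.2 := by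
    intro p n
    rw [hπ2def, Finsupp.liftAddHom_apply_single, zmultiplesHom_apply]
  set L2 : ((E × E) →₀ ℤ) →+ T :=
    Finsupp.liftAddHom (fun p => zmultiplesHom T (Λ p.1 p.2)) with hL2def
  have hL2 : ∀ (p : E × E) (n : ℤ), L2 (Finsupp.single p n) = n • Λ p.1 p.2 := by
    intro p n
    rw [hL2def, Finsupp.liftAddHom_apply_single, zmultiplesHom_apply]
  have hker2 : ∀ x, π2 x = 0 → L2 x = 0 := by
    intro x hx
    by_contra hne
    obtain ⟨c, hc⟩ := CharacterModule.exists_character_apply_ne_zero_of_ne_zero hne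
    set χT : T →+ ULift (AddCircle (1 : ℚ)) :=
      AddMonoidHom.mk' (fun t => ULift.up (c t))
        (by
          intro u v
          show ULift.up (c (u + v)) = ULift.up (c u) + ULift.up (c v)
          rw [map_add]
          rfl) with hχT
    obtain ⟨Ψ, hΨ, hΨu⟩ := huniv (ULift (AddCircle (1 : ℚ)))
      (fun e f => ULift.up (c (Λ e f)))
      (by
        intro e e' f
        show ULift.up (c (Λ (e + e') f)) = ULift.up (c (Λ e f)) + ULift.up (c (Λ e' f))
        rw [hΛa1, map_add]
        rfl)
      (by
        intro e f f'
        show ULift.up (c (Λ e (f + f'))) = ULift.up (c (Λ e f)) + ULift.up (c (Λ e f'))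
        rw [hΛa2, map_add]
        rfl)
      (by
        intro a e f
        show ULift.up (c (Λ (op a • e) f)) = ULift.up (c (Λ e (a • f)))
        rw [hΛbal])
    have key : Ψ.comp π2 = χT.comp L2 := by
      apply Finsupp.addHom_ext
      intro p n
      show Ψ (π2 (Finsupp.single p n)) = χT (L2 (Finsupp.single p n))
      rw [hπ2, hL2, map_zsmul, map_zsmul, hΨ]
      rfl
    have h3 : Ψ (π2 x) = χT (L2 x) := DFunLike.congr_fun key x
    rw [hx, map_zero] at h3
    exact hc (congrArg ULift.down h3.symm)
  have hLeq2 : ∀ x y, π2 x = π2 y → L2 x = L2 y := by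
    intro x y h
    have h2 : π2 (x - y) = 0 := by rw [map_sub, h, sub_self]
    have h3 := hker2 (x - y) h2
    rw [map_sub, sub_eq_zero] at h3
    exact h3
  have hsur : ∀ t : T, ∃ x, π2 x = t := by
    intro t
    refine AddSubgroup.closure_induction ?_ ?_ ?_ ?_ (hgen t)
    · rintro x ⟨e, f, rfl⟩
      exact ⟨Finsupp.single ((e, f) : E × E) 1, by rw [hπ2, one_smul]⟩
    · exact ⟨0, map_zero π2⟩
    · rintro x y _ _ ⟨u, hu⟩ ⟨v, hv⟩
      exact ⟨u + v, by rw [map_add, hu, hv]⟩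
    · rintro x _ ⟨u, hu⟩
      exact ⟨-u, by rw [map_neg, hu]⟩
  choose s2 hs2 using hsur
  set Φ : T →+ T := AddMonoidHom.mk' (fun t => L2 (s2 t)) (by
    intro x y
    show L2 (s2 (x + y)) = L2 (s2 x) + L2 (s2 y)
    have : L2 (s2 (x + y)) = L2 (s2 x + s2 y) := by
      apply hLeq2
      rw [map_add, hs2, hs2, hs2]
    rw [this, map_add]) with hΦdef
  have hΦ : ∀ e f, Φ (tmul e f) = Λ e f := by
    intro e f
    show L2 (s2 (tmul e f)) = Λ e f
    have : L2 (s2 (tmul e f)) = L2 (Finsupp.single ((e, f) : E × E) 1) := by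
      apply hLeq2
      rw [hs2, hπ2, one_smul]
    rw [this, hL2, one_smul]
  -- left linearity
  have hlinA : ∀ (a : A) (t : T), Φ (a • t) = a • Φ t := by
    intro a t
    exact hExt (Φ.comp (AddMonoidHom.mk' (fun t => a • t) (fun x y => smul_add a x y)))
      ((AddMonoidHom.mk' (fun t => a • t) (fun x y => smul_add a x y)).comp Φ)
      (fun e f => by
        show Φ (a • tmul e f) = a • Φ (tmul e f)
        rw [htA, hΦ, hΦ, hΛA]) t
  -- right linearity
  have hlinAop : ∀ (a : A) (t : T), Φ (op a • t) = op a • Φ t := by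
    intro a t
    exact hExt (Φ.comp (AddMonoidHom.mk' (fun t => op a • t) (fun x y => smul_add (op a) x y)))
      ((AddMonoidHom.mk' (fun t => op a • t) (fun x y => smul_add (op a) x y)).comp Φ)
      (fun e f => by
        show Φ (op a • tmul e f) = op a • Φ (tmul e f)
        rw [htAop, hΦ, hΦ, hΛop]) t
  -- involution
  have hΦΛ : ∀ e f, Φ (Λ e f) = tmul e f := by
    refine centered_span_induction hcent (fun e => ∀ f, Φ (Λ e f) = tmul e f) ?_ ?_ ?_ ?_
    · intro z hz f
      rw [hΛz z hz, hΦ, hΛswap z hz]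
    · intro f
      rw [hΛ0l, map_zero, t0l]
    · intro x y hx hy f
      rw [hΛa1, map_add, hx f, hy f, htl]
    · intro b x hx f
      rw [hΛbal, hx (b • f), htbal]
  have hinv : ∀ t : T, Φ (Φ t) = t := by
    intro t
    have := hExt (Φ.comp Φ) (AddMonoidHom.id T)
      (fun e f => by
        show Φ (Φ (tmul e f)) = tmul e f
        rw [hΦ]
        exact hΦΛ e f) t
    exact this
  -- assemble the equivalence
  refine ⟨{ toFun := ⇑Φ, invFun := ⇑Φ, left_inv := hinv, right_inv := hinv,
            map_add' := Φ.map_add }, ⟨?_, ?_, ?_, ?_⟩, ?_⟩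
  · exact hlinA
  · exact hlinAop
  · intro ω η hω hη
    show Φ (tmul ω η) = tmul η ω
    rw [hΦ]
    exact hΛz ω hω η
  · exact hinv
  · rintro τ ⟨hτA, hτop, hτflip⟩
    have hq : ∀ f z, (∀ b : A, b • z = op b • z) → τ (tmul z f) = tmul f z := by
      refine centered_span_induction hcent
        (fun f => ∀ z, (∀ b : A, b • z = op b • z) → τ (tmul z f) = tmul f z) ?_ ?_ ?_ ?_
      · intro w hw z hz
        exact hτflip z w hz hw
      · intro z hz
        rw [t0r, map_zero, t0l]
      · intro x y hx hy z hz
        rw [htr, map_add, hx z hz, hy z hz, htl]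
      · intro b x hx z hz
        have hsm : ∀ t : T, τ (op b • t) = op b • τ t := hτop b
        rw [← htAop, hsm, hx z hz, htbal, hz b, ← htAop]
    have hp : ∀ e f, τ (tmul e f) = Λ e f := by
      refine centered_span_induction hcent (fun e => ∀ f, τ (tmul e f) = Λ e f) ?_ ?_ ?_ ?_
      · intro z hz f
        rw [hq f z hz, hΛz z hz]
      · intro f
        rw [t0l, map_zero, hΛ0l]
      · intro x y hx hy f
        rw [htl, map_add, hx f, hy f, hΛa1]
      · intro b x hx f
        rw [htbal, hx (b • f), hΛbal]
    have hτΦ := hExt τ.toAddMonoidHom Φ (fun e f => by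
      show τ (tmul e f) = Φ (tmul e f)
      rw [hp e f, hΦ])
    ext t
    exact hτΦ t
end

section
/- Let V be a vector space, σ the flip on V ⊗ V, P = (1 + σ)/2, P₁₂ = P ⊗ id and P₂₃ = id ⊗ P on V ⊗ V ⊗ V. If X ∈ V ⊗ V ⊗ V satisfies σ₂₃(X) = X and σ₁₂(X) = −X, then X = 0. In particular the restriction of P₁₂ to the range of P₂₃ is injective. -/
open TensorProduct

/-- Let `V` be a vector space over a field `K` of characteristic `≠ 2`,
`σ` the flip on `V ⊗ V`, and `σ₁₂ = σ ⊗ id`, `σ₂₃ = id ⊗ σ` on `V ⊗ V ⊗ V`, with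
symmetrizing idempotents `P₁₂ = (1 + σ₁₂)/2`, `P₂₃ = (1 + σ₂₃)/2`.  If
`X ∈ V ⊗ V ⊗ V` satisfies `σ₂₃(X) = X` and `σ₁₂(X) = −X`, then `X = 0`.
In particular the restriction of `P₁₂` to the range of `P₂₃` is injective. -/
theorem sym_antisym_vanishes_and_P12_injective_on_ranP23
    {K V : Type*} [Field K] [AddCommGroup V] [Module K V]
    (h2 : (2 : K) ≠ 0)
    (s12 s23 : TensorProduct K V (TensorProduct K V V) →ₗ[K]
               TensorProduct K V (TensorProduct K V V))
    (h12 : ∀ u v w : V, s12 (u ⊗ₜ[K] (v ⊗ₜ[K] w)) = v ⊗ₜ[K] (u ⊗ₜ[K] w))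
    (h23 : ∀ u v w : V, s23 (u ⊗ₜ[K] (v ⊗ₜ[K] w)) = u ⊗ₜ[K] (w ⊗ₜ[K] v)) :
    (∀ X : TensorProduct K V (TensorProduct K V V),
        s23 X = X → s12 X = -X → X = 0) ∧
    Set.InjOn (fun X => (2 : K)⁻¹ • (X + s12 X))
      (Set.range fun X => (2 : K)⁻¹ • (X + s23 X)) := by
  have hbraid : ∀ X, s12 (s23 (s12 X)) = s23 (s12 (s23 X)) := by
    have : s12 ∘ₗ s23 ∘ₗ s12 = s23 ∘ₗ s12 ∘ₗ s23 := by
      ext u v w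
      simp [h12, h23]
    intro X
    exact LinearMap.congr_fun this X
  have hinv : ∀ X, s23 (s23 X) = X := by
    have : s23 ∘ₗ s23 = LinearMap.id := by
      ext u v w
      simp [h23]
    intro X
    exact LinearMap.congr_fun this X
  have hmain : ∀ X : TensorProduct K V (TensorProduct K V V),
      s23 X = X → s12 X = -X → X = 0 := by
    intro X hX23 hX12
    have h1 : s12 (s23 (s12 X)) = X := by
      rw [hX12, map_neg, hX23, map_neg, hX12, neg_neg]
    have h2' : s23 (s12 (s23 X)) = -X := by
      rw [hX23, hX12, map_neg, hX23]
    have : X = -X := by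
      conv_lhs => rw [← h1]
      rw [hbraid, h2']
    have h2X : (2 : K) • X = 0 := by
      rw [two_smul]
      nth_rewrite 2 [this]
      abel
    exact (smul_eq_zero_iff_right h2).mp h2X
  refine ⟨hmain, ?_⟩
  rintro X ⟨A, rfl⟩ Y ⟨B, rfl⟩ hPXY
  simp only at hPXY ⊢
  set X := (2 : K)⁻¹ • (A + s23 A) with hXdef
  set Y := (2 : K)⁻¹ • (B + s23 B) with hYdef
  have hs23X : s23 X = X := by
    rw [hXdef, map_smul, map_add, hinv, add_comm]
  have hs23Y : s23 Y = Y := by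
    rw [hYdef, map_smul, map_add, hinv, add_comm]
  have hZ23 : s23 (X - Y) = X - Y := by rw [map_sub, hs23X, hs23Y]
  have hZ12 : s12 (X - Y) = -(X - Y) := by
    have h : X + s12 X = Y + s12 Y := smul_right_injective _ (inv_ne_zero h2) hPXY
    calc s12 (X - Y) = (X + s12 X) - (Y + s12 Y) - (X - Y) := by rw [map_sub]; abel
    _ = -(X - Y) := by rw [h, sub_self, zero_sub]
  have := hmain (X - Y) hZ23 hZ12
  exact sub_eq_zero.mp this
end

section
/- Let V be a vector space, σ the flip on V ⊗ V, P = (1+σ)/2, and P₁₂ = P ⊗ id, P₂₃ = id ⊗ P on V ⊗ V ⊗ V. Then P₁₂ restricts to a linear isomorphism from Ran(P₂₃) = V ⊗ Sym²(V) onto Ran(P₁₂) = Sym²(V) ⊗ V. -/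
open TensorProduct

section Aux

variable {V : Type*} [AddCommGroup V] [Module ℂ V]
  (s12 s23 : TensorProduct ℂ V (TensorProduct ℂ V V) →ₗ[ℂ]
             TensorProduct ℂ V (TensorProduct ℂ V V))
  (h12 : ∀ u v w : V, s12 (u ⊗ₜ[ℂ] (v ⊗ₜ[ℂ] w)) = v ⊗ₜ[ℂ] (u ⊗ₜ[ℂ] w))
  (h23 : ∀ u v w : V, s23 (u ⊗ₜ[ℂ] (v ⊗ₜ[ℂ] w)) = u ⊗ₜ[ℂ] (w ⊗ₜ[ℂ] v))

include h12 h23 in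
/-- `E F (5 • E X - 4 • E F E X) = E X`, where `E = (1+s12)/2`, `F = (1+s23)/2`. -/
theorem key1_aux (E F : TensorProduct ℂ V (TensorProduct ℂ V V) →ₗ[ℂ]
      TensorProduct ℂ V (TensorProduct ℂ V V))
    (hEd : E = (2 : ℂ)⁻¹ • (LinearMap.id + s12))
    (hFd : F = (2 : ℂ)⁻¹ • (LinearMap.id + s23))
    (X : TensorProduct ℂ V (TensorProduct ℂ V V)) :
    E (F ((5 : ℂ) • E X - (4 : ℂ) • E (F (E X)))) = E X := by
  have h : (E ∘ₗ F ∘ₗ ((5 : ℂ) • E - (4 : ℂ) • (E ∘ₗ F ∘ₗ E))) = E := by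
    rw [hEd, hFd]
    apply TensorProduct.ext'
    intro u y
    induction y using TensorProduct.induction_on with
    | zero => simp
    | add a b ha hb => simp only [tmul_add, map_add, ha, hb]
    | tmul v w =>
      simp only [LinearMap.comp_apply, LinearMap.sub_apply, LinearMap.smul_apply,
        LinearMap.add_apply, LinearMap.id_apply, map_add, map_smul, map_sub, h12, h23]
      module
  have := LinearMap.congr_fun h X
  simpa using this

include h12 h23 in
/-- `5 • F E F X - 4 • F E F E F X = F X`. -/
theorem key2_aux (E F : TensorProduct ℂ V (TensorProduct ℂ V V) →ₗ[ℂ]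
      TensorProduct ℂ V (TensorProduct ℂ V V))
    (hEd : E = (2 : ℂ)⁻¹ • (LinearMap.id + s12))
    (hFd : F = (2 : ℂ)⁻¹ • (LinearMap.id + s23))
    (X : TensorProduct ℂ V (TensorProduct ℂ V V)) :
    (5 : ℂ) • F (E (F X)) - (4 : ℂ) • F (E (F (E (F X)))) = F X := by
  have h : ((5 : ℂ) • (F ∘ₗ E ∘ₗ F) - (4 : ℂ) • (F ∘ₗ E ∘ₗ F ∘ₗ E ∘ₗ F)) = F := by
    rw [hEd, hFd]
    apply TensorProduct.ext'
    intro u y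
    induction y using TensorProduct.induction_on with
    | zero => simp
    | add a b ha hb => simp only [tmul_add, map_add, ha, hb]
    | tmul v w =>
      simp only [LinearMap.comp_apply, LinearMap.sub_apply, LinearMap.smul_apply,
        LinearMap.add_apply, LinearMap.id_apply, map_add, map_smul, map_sub, h12, h23]
      module
  have := LinearMap.congr_fun h X
  simpa using this

include h23 in
/-- `F` is idempotent. -/
theorem fidem_aux (F : TensorProduct ℂ V (TensorProduct ℂ V V) →ₗ[ℂ]
      TensorProduct ℂ V (TensorProduct ℂ V V))
    (hFd : F = (2 : ℂ)⁻¹ • (LinearMap.id + s23))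
    (X : TensorProduct ℂ V (TensorProduct ℂ V V)) :
    F (F X) = F X := by
  have h : F ∘ₗ F = F := by
    rw [hFd]
    apply TensorProduct.ext'
    intro u y
    induction y using TensorProduct.induction_on with
    | zero => simp
    | add a b ha hb => simp only [tmul_add, map_add, ha, hb]
    | tmul v w =>
      simp only [LinearMap.comp_apply, LinearMap.smul_apply,
        LinearMap.add_apply, LinearMap.id_apply, map_add, map_smul, h23]
      module
  exact LinearMap.congr_fun h X

end Aux

/-- Let `V` be a (possibly infinite dimensional) complex vector space, `σ`
the flip on `V ⊗ V`, `P = (1+σ)/2`, and `P₁₂ = P ⊗ id`, `P₂₃ = id ⊗ P` on `V ⊗ V ⊗ V`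
(so `P₁₂` and `P₂₃` are determined by `P₁₂ = (1 + σ₁₂)/2`, `P₂₃ = (1 + σ₂₃)/2` with
`σ₁₂(u⊗v⊗w) = v⊗u⊗w`, `σ₂₃(u⊗v⊗w) = u⊗w⊗v`).  Then `P₁₂` restricts to a linear
isomorphism from `Ran(P₂₃) = V ⊗ Sym²(V)` onto `Ran(P₁₂) = Sym²(V) ⊗ V`: it maps
`Ran(P₂₃)` bijectively onto `Ran(P₁₂)`. -/
theorem P12_bijects_ranP23_onto_ranP12
    {V : Type*} [AddCommGroup V] [Module ℂ V]
    (s12 s23 : TensorProduct ℂ V (TensorProduct ℂ V V) →ₗ[ℂ]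
               TensorProduct ℂ V (TensorProduct ℂ V V))
    (h12 : ∀ u v w : V, s12 (u ⊗ₜ[ℂ] (v ⊗ₜ[ℂ] w)) = v ⊗ₜ[ℂ] (u ⊗ₜ[ℂ] w))
    (h23 : ∀ u v w : V, s23 (u ⊗ₜ[ℂ] (v ⊗ₜ[ℂ] w)) = u ⊗ₜ[ℂ] (w ⊗ₜ[ℂ] v)) :
    Set.BijOn (fun X => (2 : ℂ)⁻¹ • (X + s12 X))
      (Set.range fun X => (2 : ℂ)⁻¹ • (X + s23 X))
      (Set.range fun X => (2 : ℂ)⁻¹ • (X + s12 X)) := by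
  set E : TensorProduct ℂ V (TensorProduct ℂ V V) →ₗ[ℂ] _ :=
    (2 : ℂ)⁻¹ • (LinearMap.id + s12) with hE
  set F : TensorProduct ℂ V (TensorProduct ℂ V V) →ₗ[ℂ] _ :=
    (2 : ℂ)⁻¹ • (LinearMap.id + s23) with hF
  have hEfun : (fun X => (2 : ℂ)⁻¹ • (X + s12 X)) = ⇑E := by
    funext X; simp [hE]
  have hFfun : (fun X => (2 : ℂ)⁻¹ • (X + s23 X)) = ⇑F := by
    funext X; simp [hF]
  rw [hEfun, hFfun]
  refine ⟨fun x _ => ⟨x, rfl⟩, ?_, ?_⟩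
  · -- injectivity on range F
    rintro x ⟨a, rfl⟩ y ⟨b, rfl⟩ hxy
    have k2a := key2_aux s12 s23 h12 h23 E F hE hF a
    have k2b := key2_aux s12 s23 h12 h23 E F hE hF b
    rw [← k2a, ← k2b, hxy]
  · -- surjectivity onto range E
    rintro y ⟨a, rfl⟩
    exact ⟨F ((5 : ℂ) • E a - (4 : ℂ) • E (F (E a))), ⟨_, fidem_aux s23 h23 F hF _⟩,
      key1_aux s12 s23 h12 h23 E F hE hF a⟩
end

section
/- Let E be a centered A-A-bimodule which is finitely generated projective as a right A-module, and g a pseudo-Riemannian bilinear metric on E. Define g⁽²⁾ : (E ⊗_A E) ⊗_A (E ⊗_A E) → A by g⁽²⁾((e ⊗ f) ⊗ (e' ⊗ f')) = g(e ⊗ g(f ⊗ e')f'). Then the induced map V_{g⁽²⁾} : E ⊗_A E → (E ⊗_A E)* is a right A-module isomorphism. -/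
/-!
Fix a dual basis `(ωᵢ, σᵢ)` of `E`. By balancedness every element of `E ⊗_A E` has the form
`∑ ωᵢ ⊗ cᵢ`, and then `g⁽²⁾(∑ ωᵢ ⊗ cᵢ, e' ⊗ f') = g(∑ ωᵢ g(cᵢ, e'), f')`.
If this vanishes for all `e', f'`, non-degeneracy of `g` kills each `dⱼ = ∑ σⱼ(ωᵢ) cᵢ`, and
`∑ ωᵢ ⊗ cᵢ = ∑ ωⱼ ⊗ dⱼ = 0`. Conversely, a functional `φ` yields a right `A`-linear `κ` with
`g(κ e', ·) = φ(e' ⊗ ·)`, and `cᵢ := V_g⁻¹(σᵢ ∘ κ)` gives a preimage of `φ`.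
That simple tensors generate `E ⊗_A E` is read off the universal property by testing it
against `ℚ/ℤ`-valued characters.
-/

open MulOpposite

-- `ℚ/ℤ` cogenerates abelian groups; lifting it reaches whatever universe a hypothesis needs.
theorem AddSubgroup.closure_eq_top_of_forall_character {T : Type*} [AddCommGroup T] {s : Set T}
    (h : ∀ F : T →+ ULift.{v} (AddCircle (1 : ℚ)), (∀ x ∈ s, F x = 0) → F = 0) :
    AddSubgroup.closure s = ⊤ := by
  refine eq_top_iff.2 fun t _ => (QuotientAddGroup.eq_zero_iff t).1 ?_
  refine CharacterModule.eq_zero_of_character_apply fun c => ?_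
  let F : T →+ ULift.{v} (AddCircle (1 : ℚ)) :=
    (AddEquiv.ulift.symm.toAddMonoidHom.comp c).comp (QuotientAddGroup.mk' _)
  have hF : F = 0 := h F fun x hx => by
    simp [F, (QuotientAddGroup.eq_zero_iff x).2 (AddSubgroup.subset_closure hx)]
  exact congrArg ULift.down (DFunLike.congr_fun hF t)

section DualBasis

variable {A E : Type*} [Ring A] [AddCommGroup E] [Module Aᵐᵒᵖ E]

def IsDualBasis {ι : Type*} [Fintype ι] (ω : ι → E) (σ : ι → E →ₗ[Aᵐᵒᵖ] A) : Prop :=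
  ∀ e, ∑ i, op (σ i e) • ω i = e

variable (A E) in
theorem exists_isDualBasis [Module.Finite Aᵐᵒᵖ E] [Module.Projective Aᵐᵒᵖ E] :
    ∃ (n : ℕ) (ω : Fin n → E) (σ : Fin n → E →ₗ[Aᵐᵒᵖ] A), IsDualBasis ω σ := by
  obtain ⟨n, π, σ, -, -, hπσ⟩ := Module.Finite.exists_comp_eq_id_of_projective Aᵐᵒᵖ E
  refine ⟨n, fun i => π (Pi.single i 1),
    fun i => ⟨⟨fun e => unop (σ e i), fun _ _ => by simp⟩, fun m e => by simp only [map_smul]; rfl⟩,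
    fun e => ?_⟩
  calc ∑ i, op (unop (σ e i)) • π (Pi.single i 1) = π (∑ i, σ e i • Pi.single i 1) := by
        simp
    _ = e := by rw [← pi_eq_sum_univ' (σ e), ← LinearMap.comp_apply, hπσ, LinearMap.id_apply]

end DualBasis

section Bimodule

variable {A E T : Type*} [Ring A] [AddCommGroup E] [Module A E] [Module Aᵐᵒᵖ E] [AddCommGroup T]
  {ι : Type*} [Fintype ι] {ω : ι → E} {σ : ι → E →ₗ[Aᵐᵒᵖ] A}

theorem exists_eq_sum_tmul {t : E →+ E →+ T} (ht : ∀ (a : A) e f, t (op a • e) f = t e (a • f))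
    (hgen : AddSubgroup.closure {x | ∃ e f, t e f = x} = ⊤) (hσ : IsDualBasis ω σ) (x : T) :
    ∃ c : ι → E, ∑ i, t (ω i) (c i) = x := by
  let Φ : (ι → E) →+ T := ∑ i, (t (ω i)).comp (Pi.evalAddMonoidHom _ i)
  have hΦ (c : ι → E) : Φ c = ∑ i, t (ω i) (c i) := by simp [Φ]
  have hrange : AddSubgroup.closure {x | ∃ e f, t e f = x} ≤ Φ.range := by
    refine (AddSubgroup.closure_le _).2 ?_
    rintro _ ⟨e, f, rfl⟩
    refine ⟨fun i => σ i e • f, ?_⟩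
    conv_rhs => rw [← hσ e]
    simp [hΦ, ht]
  obtain ⟨c, hc⟩ := hrange (hgen ▸ AddSubgroup.mem_top x)
  exact ⟨c, (hΦ c).symm.trans hc⟩

theorem g2_sum_tmul_tmul {t : E →+ E →+ T} {b : E →+ E →ₗ[Aᵐᵒᵖ] A} {g2 : T →+ T →+ A}
    (hg2 : ∀ e f e' f', g2 (t e f) (t e' f') = b e (b f e' • f'))
    (hb : ∀ (a : A) e f, b (op a • e) f = b e (a • f)) (c : ι → E) (e' f' : E) :
    g2 (∑ i, t (ω i) (c i)) (t e' f') = b (∑ i, op (b (c i) e') • ω i) f' := by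
  simp [hg2, hb]

theorem sum_tmul_eq_zero {t : E →+ E →+ T} {b : E →+ E →ₗ[Aᵐᵒᵖ] A}
    (ht : ∀ (a : A) e f, t (op a • e) f = t e (a • f)) (hbinj : Function.Injective b)
    (hbA : ∀ (a : A) e f, b (a • e) f = a * b e f) (hσ : IsDualBasis ω σ) {c : ι → E}
    (hc : ∀ e', ∑ i, op (b (c i) e') • ω i = 0) : ∑ i, t (ω i) (c i) = 0 := by
  have hd : ∀ j, ∑ i, σ j (ω i) • c i = 0 := fun j => by
    refine (injective_iff_map_eq_zero b).1 hbinj _ (LinearMap.ext fun e' => ?_)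
    simpa [hbA, map_sum, op_smul_eq_mul] using congrArg (σ j) (hc e')
  calc ∑ i, t (ω i) (c i) = ∑ i, ∑ j, t (ω j) (σ j (ω i) • c i) := by
        refine Finset.sum_congr rfl fun i _ => ?_
        conv_lhs => rw [← hσ (ω i)]
        simp [ht]
    _ = 0 := by simp [Finset.sum_comm (γ := ι), ← map_sum, hd]

theorem eq_zero_of_forall_g2_tmul_eq_zero {t : E →+ E →+ T} {b : E →+ E →ₗ[Aᵐᵒᵖ] A}
    {g2 : T →+ T →+ A} (ht : ∀ (a : A) e f, t (op a • e) f = t e (a • f))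
    (hgen : AddSubgroup.closure {x | ∃ e f, t e f = x} = ⊤)
    (hg2 : ∀ e f e' f', g2 (t e f) (t e' f') = b e (b f e' • f')) (hbinj : Function.Injective b)
    (hb : ∀ (a : A) e f, b (op a • e) f = b e (a • f))
    (hbA : ∀ (a : A) e f, b (a • e) f = a * b e f) (hσ : IsDualBasis ω σ) {x : T}
    (hx : ∀ e' f', g2 x (t e' f') = 0) : x = 0 := by
  obtain ⟨c, rfl⟩ := exists_eq_sum_tmul ht hgen hσ x
  refine sum_tmul_eq_zero ht hbinj hbA hσ fun e' =>
    (injective_iff_map_eq_zero b).1 hbinj _ (LinearMap.ext fun f' => ?_)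
  rw [← g2_sum_tmul_tmul hg2 hb, hx]
  rfl

theorem exists_linearMap_apply_eq {b ψ : E →+ E →ₗ[Aᵐᵒᵖ] A} (hbij : Function.Bijective b)
    (hb : ∀ (a : A) e f, b (op a • e) f = b e (a • f))
    (hψ : ∀ (a : A) e f, ψ (op a • e) f = ψ e (a • f)) :
    ∃ κ : E →ₗ[Aᵐᵒᵖ] E, ∀ e, b (κ e) = ψ e := by
  let β := AddEquiv.ofBijective b hbij
  have hβ : ∀ φ, b (β.symm φ) = φ := β.apply_symm_apply
  refine ⟨⟨⟨fun e => β.symm (ψ e), by simp⟩, fun m e => ?_⟩, fun e => hβ (ψ e)⟩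
  induction m using MulOpposite.rec' with | h a => ?_
  refine hbij.1 (LinearMap.ext fun f => ?_)
  change b (β.symm _) f = b (op a • β.symm _) f
  rw [hb, hβ, hβ, hψ]

theorem exists_g2_tmul_eq {t : E →+ E →+ T} {b ψ : E →+ E →ₗ[Aᵐᵒᵖ] A} {g2 : T →+ T →+ A}
    (hg2 : ∀ e f e' f', g2 (t e f) (t e' f') = b e (b f e' • f')) (hbij : Function.Bijective b)
    (hb : ∀ (a : A) e f, b (op a • e) f = b e (a • f))
    (hψ : ∀ (a : A) e f, ψ (op a • e) f = ψ e (a • f)) (hσ : IsDualBasis ω σ) :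
    ∃ x, ∀ e' f', g2 x (t e' f') = ψ e' f' := by
  obtain ⟨κ, hκ⟩ := exists_linearMap_apply_eq hbij hb hψ
  choose c hc using fun i => hbij.2 (σ i ∘ₗ κ)
  refine ⟨∑ i, t (ω i) (c i), fun e' f' => ?_⟩
  rw [g2_sum_tmul_tmul hg2 hb]
  simp [hc, hσ (κ e'), hκ]

end Bimodule

theorem Vg2_is_isomorphism_general
    {A E T : Type*} [Ring A] [AddCommGroup E] [Module A E] [Module Aᵐᵒᵖ E]
    [AddCommGroup T] [Module Aᵐᵒᵖ T]
    [Module.Finite Aᵐᵒᵖ E] [Module.Projective Aᵐᵒᵖ E]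
    (tmul : E → E → T)
    (htl : ∀ e e' f : E, tmul (e + e') f = tmul e f + tmul e' f)
    (htr : ∀ e f f' : E, tmul e (f + f') = tmul e f + tmul e f')
    (htbal : ∀ (a : A) (e f : E), tmul (op a • e) f = tmul e (a • f))
    (htAop : ∀ (a : A) (e f : E), op a • tmul e f = tmul e (op a • f))
    (huniv : ∀ (P : Type*) [AddCommGroup P] (φ : E → E → P),
      (∀ e e' f : E, φ (e + e') f = φ e f + φ e' f) →
      (∀ e f f' : E, φ e (f + f') = φ e f + φ e f') →
      (∀ (a : A) (e f : E), φ (op a • e) f = φ e (a • f)) →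
      ∃! Φ : T →+ P, ∀ e f : E, Φ (tmul e f) = φ e f)
    (g : E → E → A)
    (hgaddl : ∀ e e' f, g (e + e') f = g e f + g e' f)
    (hgaddr : ∀ e f f', g e (f + f') = g e f + g e f')
    (hgbal : ∀ (a : A) (e f : E), g (op a • e) f = g e (a • f))
    (hgA : ∀ (a : A) (e f : E), g (a • e) f = a * g e f)
    (hgAop : ∀ (a : A) (e f : E), g e (op a • f) = g e f * a)
    (hgnondeg : ∀ φ : E →ₗ[Aᵐᵒᵖ] A, ∃! e : E, ∀ f, g e f = φ f)
    (g2 : T → T → A)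
    (hg2addl : ∀ x x' y : T, g2 (x + x') y = g2 x y + g2 x' y)
    (hg2addr : ∀ x y y' : T, g2 x (y + y') = g2 x y + g2 x y')
    (hg2def : ∀ e f e' f' : E,
      g2 (tmul e f) (tmul e' f') = g e ((g f e') • f')) :
    ∀ φ : T →ₗ[Aᵐᵒᵖ] A, ∃! x : T, ∀ y : T, g2 x y = φ y := by
  intro φ
  let t : E →+ E →+ T := AddMonoidHom.mk' (fun e => AddMonoidHom.mk' (tmul e) (htr e))
    fun e e' => AddMonoidHom.ext (htl e e')
  let b : E →+ E →ₗ[Aᵐᵒᵖ] A :=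
    AddMonoidHom.mk' (fun e => ⟨⟨g e, hgaddr e⟩, fun m f => hgAop (unop m) e f⟩)
      fun e e' => LinearMap.ext (hgaddl e e')
  let G : T →+ T →+ A := AddMonoidHom.mk' (fun x => AddMonoidHom.mk' (g2 x) (hg2addr x))
    fun x x' => AddMonoidHom.ext (hg2addl x x')
  let ψ : E →+ E →ₗ[Aᵐᵒᵖ] A :=
    AddMonoidHom.mk' (fun e => φ ∘ₗ ⟨t e, fun m f => (htAop (unop m) e f).symm⟩)
      fun e e' => LinearMap.ext fun f => by simp [t, htl]
  have hgen : AddSubgroup.closure {x | ∃ e f, t e f = x} = ⊤ :=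
    AddSubgroup.closure_eq_top_of_forall_character fun F hF =>
      (huniv _ (fun _ _ => 0) (by simp) (by simp) (by simp)).unique
        (fun e f => hF _ ⟨e, f, rfl⟩) (fun _ _ => rfl)
  have hbij : Function.Bijective b := (Function.bijective_iff_existsUnique _).2 fun φ => by
    simp only [LinearMap.ext_iff]
    exact hgnondeg φ
  obtain ⟨n, ω, σ, hσ⟩ := exists_isDualBasis A E
  obtain ⟨x, hx⟩ := exists_g2_tmul_eq (t := t) (b := b) (ψ := ψ) (g2 := G) hg2def hbij
    hgbal (fun a e f => congrArg φ (htbal a e f)) hσ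
  have hGx : G x = φ.toAddMonoidHom :=
    AddMonoidHom.eq_of_eqOn_dense hgen (by rintro _ ⟨e, f, rfl⟩; exact hx e f)
  refine ⟨x, fun y => DFunLike.congr_fun hGx y, fun x' hx' => sub_eq_zero.1 ?_⟩
  refine eq_zero_of_forall_g2_tmul_eq_zero (t := t) (b := b) (g2 := G) htbal hgen hg2def hbij.1
    hgbal hgA hσ fun e' f' => ?_
  rw [map_sub, AddMonoidHom.sub_apply, hGx]
  exact sub_eq_zero.2 (hx' _)

/-- Let `E` be a centered `A`-`A`-bimodule which is finitely generated
projective as a right `A`-module, and `g` a pseudo-Riemannian bilinear metric on `E`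
(an `A`-`A`-bimodule map `E ⊗_A E → A`, symmetric with respect to the canonical flip and
non-degenerate).  Define `g⁽²⁾ : (E ⊗_A E) ⊗_A (E ⊗_A E) → A` by
`g⁽²⁾((e ⊗ f) ⊗ (e' ⊗ f')) = g(e ⊗ g(f ⊗ e')f')`.  Then the induced map
`V_{g⁽²⁾} : E ⊗_A E → (E ⊗_A E)*` is a right `A`-module isomorphism; equivalently,
for every right `A`-linear functional `φ` on `E ⊗_A E` there is a unique `x ∈ E ⊗_A E`
with `g⁽²⁾(x ⊗ ·) = φ`.  Here `T` with `tmul` (balanced, biadditive, satisfying the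
universal property) plays the role of `E ⊗_A E`. -/
theorem Vg2_is_isomorphism
    {A E T : Type*} [Ring A] [AddCommGroup E] [Module A E] [Module Aᵐᵒᵖ E]
    [SMulCommClass A Aᵐᵒᵖ E]
    [AddCommGroup T] [Module A T] [Module Aᵐᵒᵖ T] [SMulCommClass A Aᵐᵒᵖ T]
    [Module.Finite Aᵐᵒᵖ E] [Module.Projective Aᵐᵒᵖ E]
    (hcent : Submodule.span Aᵐᵒᵖ {e : E | ∀ b : A, b • e = op b • e} = ⊤)
    (tmul : E → E → T)
    (htl : ∀ e e' f : E, tmul (e + e') f = tmul e f + tmul e' f)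
    (htr : ∀ e f f' : E, tmul e (f + f') = tmul e f + tmul e f')
    (htbal : ∀ (a : A) (e f : E), tmul (op a • e) f = tmul e (a • f))
    (htA : ∀ (a : A) (e f : E), a • tmul e f = tmul (a • e) f)
    (htAop : ∀ (a : A) (e f : E), op a • tmul e f = tmul e (op a • f))
    (huniv : ∀ (P : Type*) [AddCommGroup P] (φ : E → E → P),
      (∀ e e' f : E, φ (e + e') f = φ e f + φ e' f) →
      (∀ e f f' : E, φ e (f + f') = φ e f + φ e f') →
      (∀ (a : A) (e f : E), φ (op a • e) f = φ e (a • f)) →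
      ∃! Φ : T →+ P, ∀ e f : E, Φ (tmul e f) = φ e f)
    (g : E → E → A)
    (hgaddl : ∀ e e' f, g (e + e') f = g e f + g e' f)
    (hgaddr : ∀ e f f', g e (f + f') = g e f + g e f')
    (hgbal : ∀ (a : A) (e f : E), g (op a • e) f = g e (a • f))
    (hgA : ∀ (a : A) (e f : E), g (a • e) f = a * g e f)
    (hgAop : ∀ (a : A) (e f : E), g e (op a • f) = g e f * a)
    (hgsym : ∀ ω η : E, (∀ b : A, b • ω = op b • ω) → (∀ b : A, b • η = op b • η) →
      ∀ a : A, g ω (op a • η) = g η (op a • ω))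
    (hgnondeg : ∀ φ : E →ₗ[Aᵐᵒᵖ] A, ∃! e : E, ∀ f, g e f = φ f)
    (g2 : T → T → A)
    (hg2addl : ∀ x x' y : T, g2 (x + x') y = g2 x y + g2 x' y)
    (hg2addr : ∀ x y y' : T, g2 x (y + y') = g2 x y + g2 x y')
    (hg2def : ∀ e f e' f' : E,
      g2 (tmul e f) (tmul e' f') = g e ((g f e') • f')) :
    ∀ φ : T →ₗ[Aᵐᵒᵖ] A, ∃! x : T, ∀ y : T, g2 x y = φ y :=
  Vg2_is_isomorphism_general tmul htl htr htbal htAop huniv g hgaddl hgaddr hgbal hgA hgAop hgnondeg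
    g2 hg2addl hg2addr hg2def
end

section
/- With E a centered bimodule, g a pseudo-Riemannian bilinear metric and σ the canonical flip, V_{g⁽²⁾}(σ(ω ⊗ η)) = V_{g⁽²⁾}(ω ⊗ η) ∘ σ for all ω, η ∈ E; equivalently the symmetrization idempotent P_sym = (1+σ)/2 is self-adjoint with respect to g⁽²⁾. -/
open MulOpposite

/-! The flip `σ` and the right `Aᵐᵒᵖ`-action commute, and every tensor is a sum of tensors
`ω ⊗ η·a` with `ω, η` central, so it suffices to check the identity on pairs of such tensors.
There `σ` merely swaps `ω` and `η`, and both sides of the identity reduce to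
`g(ω, ρ) g(η, τ) a b`; they agree because `g` takes central values on central elements. -/

section Bimodule

variable {A E : Type*} [Ring A] [AddCommGroup E] [Module A E] [Module Aᵐᵒᵖ E]

theorem commute_g_of_central {g : E → E → A}
    (hgA : ∀ (a : A) (e f : E), g (a • e) f = a * g e f)
    (hgbal : ∀ (a : A) (e f : E), g (op a • e) f = g e (a • f))
    (hgAop : ∀ (a : A) (e f : E), g e (op a • f) = g e f * a)
    {ω η : E} (hω : ∀ b : A, b • ω = op b • ω) (hη : ∀ b : A, b • η = op b • η) (c : A) :
    Commute c (g ω η) :=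
  calc c * g ω η = g (op c • ω) η := by rw [← hω c, hgA]
    _ = g ω η * c := by rw [hgbal, hη c, hgAop]

theorem g_op_smul_left_of_central {g : E → E → A}
    (hgbal : ∀ (a : A) (e f : E), g (op a • e) f = g e (a • f))
    (hgAop : ∀ (a : A) (e f : E), g e (op a • f) = g e f * a)
    (a : A) (ω : E) {ρ : E} (hρ : ∀ b : A, b • ρ = op b • ρ) :
    g (op a • ω) ρ = g ω ρ * a := by
  rw [hgbal, hρ a, hgAop]

theorem smul_op_smul_of_central [SMulCommClass A Aᵐᵒᵖ E] {η : E}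
    (hη : ∀ b : A, b • η = op b • η) (c b : A) :
    c • op b • η = op (c * b) • η := by
  rw [smul_comm, hη c, smul_smul, ← op_mul]

theorem g_smul_g_op_smul_swap [SMulCommClass A Aᵐᵒᵖ E] {g : E → E → A}
    (hgA : ∀ (a : A) (e f : E), g (a • e) f = a * g e f)
    (hgbal : ∀ (a : A) (e f : E), g (op a • e) f = g e (a • f))
    (hgAop : ∀ (a : A) (e f : E), g e (op a • f) = g e f * a)
    (ω : E) {η ρ τ : E} (hη : ∀ b : A, b • η = op b • η) (hρ : ∀ b : A, b • ρ = op b • ρ)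
    (hτ : ∀ b : A, b • τ = op b • τ) (a b : A) :
    g η (g (op a • ω) ρ • op b • τ) = g ω (g (op a • η) τ • op b • ρ) := by
  rw [g_op_smul_left_of_central hgbal hgAop a ω hρ, g_op_smul_left_of_central hgbal hgAop a η hτ,
    smul_op_smul_of_central hτ, smul_op_smul_of_central hρ, hgAop, hgAop]
  calc g η τ * (g ω ρ * a * b) = g η τ * g ω ρ * a * b := by simp only [mul_assoc]
    _ = g ω ρ * g η τ * a * b := by rw [(commute_g_of_central hgA hgbal hgAop hη hτ _).eq]
    _ = g ω ρ * (g η τ * a * b) := by simp only [mul_assoc]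

end Bimodule

def reducedTensors (A : Type*) {E T : Type*} [SMul Aᵐᵒᵖ E]
    (tmul : E → E → T) (C : Set E) : Set T :=
  {x | ∃ ω ∈ C, ∃ η ∈ C, ∃ a : A, x = tmul ω (op a • η)}

theorem closure_reducedTensors_eq_top {A E T : Type*} [Ring A] [AddCommGroup E] [SMul A E]
    [Module Aᵐᵒᵖ E] [AddCommGroup T] {C : Set E} (hC : Submodule.span Aᵐᵒᵖ C = ⊤)
    {tmul : E → E → T}
    (htl : ∀ e e' f : E, tmul (e + e') f = tmul e f + tmul e' f)
    (htr : ∀ e f f' : E, tmul e (f + f') = tmul e f + tmul e f')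
    (htbal : ∀ (a : A) (e f : E), tmul (op a • e) f = tmul e (a • f))
    (hgen : AddSubgroup.closure {x : T | ∃ e f : E, x = tmul e f} = ⊤) :
    AddSubgroup.closure (reducedTensors A tmul C) = ⊤ := by
  set S := AddSubgroup.closure (reducedTensors A tmul C)
  have tmul_zero_left (f : E) : tmul 0 f = 0 := (AddMonoidHom.mk' (tmul · f) (htl · · f)).map_zero
  have tmul_zero_right (e : E) : tmul e 0 = 0 := (AddMonoidHom.mk' (tmul e) (htr e)).map_zero
  have mem_of_left_mem {ω : E} (hω : ω ∈ C) (f : E) (b : A) : tmul ω (op b • f) ∈ S := by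
    induction (hC ▸ Submodule.mem_top : f ∈ Submodule.span Aᵐᵒᵖ C) using Submodule.span_induction
      generalizing b with
    | mem η hη => exact AddSubgroup.subset_closure ⟨ω, hω, η, hη, b, rfl⟩
    | zero => rw [smul_zero, tmul_zero_right]; exact zero_mem S
    | add x y _ _ hx hy => rw [smul_add, htr]; exact add_mem (hx b) (hy b)
    | smul c x _ hx => simpa only [smul_smul, op_unop] using hx (op b * c).unop
  have tmul_mem (e f : E) : tmul e f ∈ S := by
    induction (hC ▸ Submodule.mem_top : e ∈ Submodule.span Aᵐᵒᵖ C) using Submodule.span_induction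
      generalizing f with
    | mem ω hω => simpa only [op_one, one_smul] using mem_of_left_mem hω f 1
    | zero => rw [tmul_zero_left]; exact zero_mem S
    | add x y _ _ hx hy => rw [htl]; exact add_mem (hx f) (hy f)
    | smul c x _ hx => rw [← op_unop c, htbal]; exact hx _
  rw [eq_top_iff, ← hgen, AddSubgroup.closure_le]
  rintro _ ⟨e, f, rfl⟩
  exact tmul_mem e f

theorem AddMonoidHom.apply_map_eq_of_closure_eq_top {T M : Type*} [AddCommGroup T]
    [AddCommGroup M] {S : Set T} (hS : AddSubgroup.closure S = ⊤) (σ : T →+ T) (B : T →+ T →+ M)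
    (h : ∀ s ∈ S, ∀ t ∈ S, B (σ s) t = B s (σ t)) (x y : T) :
    B (σ x) y = B x (σ y) := by
  induction (hS ▸ AddSubgroup.mem_top x : x ∈ AddSubgroup.closure S),
    (hS ▸ AddSubgroup.mem_top y : y ∈ AddSubgroup.closure S)
    using AddSubgroup.closure_induction₂ with
  | mem s t hs ht => exact h s hs t ht
  | zero_left => simp
  | zero_right => simp
  | add_left x y z _ _ _ hx hy => simp only [map_add, AddMonoidHom.add_apply, hx, hy]
  | add_right y z x _ _ _ hy hz => simp only [map_add, hy, hz]
  | neg_left x y _ _ h => simp only [map_neg, AddMonoidHom.neg_apply, h]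
  | neg_right x y _ _ h => simp only [map_neg, h]

theorem Psym_selfadjoint_wrt_g2_general
    {A E T : Type*} [Ring A] [AddCommGroup E] [Module A E] [Module Aᵐᵒᵖ E]
    [SMulCommClass A Aᵐᵒᵖ E]
    [AddCommGroup T] [Module Aᵐᵒᵖ T]
    (hcent : Submodule.span Aᵐᵒᵖ {e : E | ∀ b : A, b • e = op b • e} = ⊤)
    (tmul : E → E → T)
    (htl : ∀ e e' f : E, tmul (e + e') f = tmul e f + tmul e' f)
    (htr : ∀ e f f' : E, tmul e (f + f') = tmul e f + tmul e f')
    (htbal : ∀ (a : A) (e f : E), tmul (op a • e) f = tmul e (a • f))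
    (htAop : ∀ (a : A) (e f : E), op a • tmul e f = tmul e (op a • f))
    (hgen : AddSubgroup.closure {x : T | ∃ e f : E, x = tmul e f} = ⊤)
    (σ : T → T)
    (hσadd : ∀ x y : T, σ (x + y) = σ x + σ y)
    (hσAop : ∀ (a : A) (x : T), σ (op a • x) = op a • σ x)
    (hσflip : ∀ ω η : E, (∀ b : A, b • ω = op b • ω) → (∀ b : A, b • η = op b • η) →
        σ (tmul ω η) = tmul η ω)
    (g : E → E → A)
    (hgbal : ∀ (a : A) (e f : E), g (op a • e) f = g e (a • f))
    (hgA : ∀ (a : A) (e f : E), g (a • e) f = a * g e f)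
    (hgAop : ∀ (a : A) (e f : E), g e (op a • f) = g e f * a)
    (g2 : T → T → A)
    (hg2addl : ∀ x x' y : T, g2 (x + x') y = g2 x y + g2 x' y)
    (hg2addr : ∀ x y y' : T, g2 x (y + y') = g2 x y + g2 x y')
    (hg2def : ∀ e f e' f' : E,
      g2 (tmul e f) (tmul e' f') = g e ((g f e') • f')) :
    ∀ (ω η : E) (y : T), g2 (σ (tmul ω η)) y = g2 (tmul ω η) (σ y) := by
  set C : Set E := {e : E | ∀ b : A, b • e = op b • e}
  have hσ_reduced {ω η : E} (hω : ω ∈ C) (hη : η ∈ C) (a : A) :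
      σ (tmul ω (op a • η)) = tmul η (op a • ω) := by
    rw [← htAop, hσAop, hσflip ω η hω hη, htAop]
  let σ' : T →+ T := AddMonoidHom.mk' σ hσadd
  let B : T →+ T →+ A := AddMonoidHom.mk' (fun x ↦ AddMonoidHom.mk' (g2 x) (hg2addr x))
    fun x x' ↦ AddMonoidHom.ext (hg2addl x x')
  have h_reduced : ∀ s ∈ reducedTensors A tmul C, ∀ t ∈ reducedTensors A tmul C,
      B (σ' s) t = B s (σ' t) := by
    rintro _ ⟨ω, hω, η, hη, a, rfl⟩ _ ⟨ρ, hρ, τ, hτ, b, rfl⟩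
    change g2 (σ _) _ = g2 _ (σ _)
    rw [hσ_reduced hω hη, hσ_reduced hρ hτ, hg2def, hg2def]
    exact g_smul_g_op_smul_swap hgA hgbal hgAop ω hη hρ hτ a b
  intro ω η y
  exact AddMonoidHom.apply_map_eq_of_closure_eq_top
    (closure_reducedTensors_eq_top hcent htl htr htbal hgen) σ' B h_reduced (tmul ω η) y

/-- With `E` a centered bimodule, `g` a pseudo-Riemannian bilinear metric
and `σ` the canonical flip on `E ⊗_A E`, one has
`V_{g⁽²⁾}(σ(ω ⊗ η)) = V_{g⁽²⁾}(ω ⊗ η) ∘ σ` for all `ω, η ∈ E`, i.e.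
`g⁽²⁾(σ(ω ⊗ η) ⊗ y) = g⁽²⁾((ω ⊗ η) ⊗ σ(y))` for all `y ∈ E ⊗_A E`; equivalently the
symmetrization idempotent `P_sym = (1+σ)/2` is self-adjoint with respect to `g⁽²⁾`.
Here `T` with `tmul` plays the role of `E ⊗_A E` (additively generated by the simple
tensors), and `σ` is the canonical flip, determined by flipping central simple tensors. -/
theorem Psym_selfadjoint_wrt_g2
    {A E T : Type*} [Ring A] [AddCommGroup E] [Module A E] [Module Aᵐᵒᵖ E]
    [SMulCommClass A Aᵐᵒᵖ E]
    [AddCommGroup T] [Module A T] [Module Aᵐᵒᵖ T] [SMulCommClass A Aᵐᵒᵖ T]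
    (hcent : Submodule.span Aᵐᵒᵖ {e : E | ∀ b : A, b • e = op b • e} = ⊤)
    (tmul : E → E → T)
    (htl : ∀ e e' f : E, tmul (e + e') f = tmul e f + tmul e' f)
    (htr : ∀ e f f' : E, tmul e (f + f') = tmul e f + tmul e f')
    (htbal : ∀ (a : A) (e f : E), tmul (op a • e) f = tmul e (a • f))
    (htA : ∀ (a : A) (e f : E), a • tmul e f = tmul (a • e) f)
    (htAop : ∀ (a : A) (e f : E), op a • tmul e f = tmul e (op a • f))
    (hgen : AddSubgroup.closure {x : T | ∃ e f : E, x = tmul e f} = ⊤)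
    (σ : T → T)
    (hσadd : ∀ x y : T, σ (x + y) = σ x + σ y)
    (hσA : ∀ (a : A) (x : T), σ (a • x) = a • σ x)
    (hσAop : ∀ (a : A) (x : T), σ (op a • x) = op a • σ x)
    (hσflip : ∀ ω η : E, (∀ b : A, b • ω = op b • ω) → (∀ b : A, b • η = op b • η) →
        σ (tmul ω η) = tmul η ω)
    (g : E → E → A)
    (hgaddl : ∀ e e' f, g (e + e') f = g e f + g e' f)
    (hgaddr : ∀ e f f', g e (f + f') = g e f + g e f')
    (hgbal : ∀ (a : A) (e f : E), g (op a • e) f = g e (a • f))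
    (hgA : ∀ (a : A) (e f : E), g (a • e) f = a * g e f)
    (hgAop : ∀ (a : A) (e f : E), g e (op a • f) = g e f * a)
    (hgsym : ∀ ω η : E, (∀ b : A, b • ω = op b • ω) → (∀ b : A, b • η = op b • η) →
      ∀ a : A, g ω (op a • η) = g η (op a • ω))
    (g2 : T → T → A)
    (hg2addl : ∀ x x' y : T, g2 (x + x') y = g2 x y + g2 x' y)
    (hg2addr : ∀ x y y' : T, g2 x (y + y') = g2 x y + g2 x y')
    (hg2def : ∀ e f e' f' : E,
      g2 (tmul e f) (tmul e' f') = g e ((g f e') • f')) :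
    ∀ (ω η : E) (y : T), g2 (σ (tmul ω η)) y = g2 (tmul ω η) (σ y) :=
  Psym_selfadjoint_wrt_g2_general hcent tmul htl htr htbal htAop hgen σ hσadd hσAop hσflip g hgbal
    hgA hgAop g2 hg2addl hg2addr hg2def
end

section
/- Let E be a centered A-A-bimodule, g a pseudo-Riemannian bilinear metric on E with E finitely generated projective over A, σ the canonical flip, and P_sym = (1+σ)/2 with Sym := Ran(P_sym). Then V_{g⁽²⁾} restricts to an isomorphism from Sym onto Sym* (identified with {φ ∈ (E⊗_A E)* : φ ∘ (1 − P_sym) = 0}). -/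
/-!
Since `E` is finitely generated projective and spanned by its central elements, there are
central `x_j` and vectors `c_j` with `x = ∑ x_j g(c_j, x)` for all `x` (a dual basis, made
`g`-dual by nondegeneracy). For a functional `φ` let `w e` represent `f ↦ φ (e ⊗ f)` through
`g`; then `y = ∑ w(x_j) ⊗ c_j` represents `φ` through `g⁽²⁾`. Conversely `y` is recovered from
`g⁽²⁾(y, ·)` as `∑ D(c_j) ⊗ x_j`, where `D e` represents `f ↦ g⁽²⁾(y, e ⊗ f)`, so `V_{g⁽²⁾}`
is a bijection onto `(E ⊗_A E)*`. On tensors of central elements `σ` is self-adjoint for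
`g⁽²⁾`, because `g` takes values commuting with `A` there; hence, `2` being cancellable in `A`,
the representative of a `P_sym`-invariant `φ` is fixed by `P_sym`.
-/

open MulOpposite

/-- Characters into `ℚ/ℤ` separate the points of a quotient; the `ULift` makes the test
available in the universe of a universal property. -/
theorem AddSubgroup.closure_eq_top_of_forall_hom_eq_zero {T : Type*} [AddCommGroup T]
    {S : Set T} (h : ∀ c : T →+ ULift.{v} (AddCircle (1 : ℚ)), (∀ x ∈ S, c x = 0) → c = 0) :
    AddSubgroup.closure S = ⊤ := by
  refine eq_top_iff.2 fun y _ => ?_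
  by_contra hy
  obtain ⟨c, hc⟩ := CharacterModule.exists_character_apply_ne_zero_of_ne_zero
    ((QuotientAddGroup.eq_zero_iff y).not.2 hy)
  let χ : T →+ ULift.{v} (AddCircle (1 : ℚ)) := AddEquiv.ulift.symm.toAddMonoidHom.comp
    ((c : T ⧸ AddSubgroup.closure S →+ AddCircle (1 : ℚ)).comp (QuotientAddGroup.mk' _))
  have hχ : ∀ x, χ x = ULift.up (c x) := fun _ => rfl
  refine hc (congrArg ULift.down (DFunLike.congr_fun (h χ fun x hx => ?_) y))
  rw [hχ, (QuotientAddGroup.eq_zero_iff x).2 (AddSubgroup.subset_closure hx), map_zero]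
  rfl

theorem Module.exists_finset_dual_family {R M : Type*} [Semiring R] [AddCommMonoid M]
    [Module R M] [Module.Finite R M] [Module.Projective R M] {S : Set M}
    (hS : Submodule.span R S = ⊤) :
    ∃ t : Finset M, ↑t ⊆ S ∧ ∃ s : M →ₗ[R] t → R, ∀ x, ∑ j, s x j • (j : M) = x := by
  obtain ⟨t, htS, hspan⟩ :=
    (Submodule.fg_span_iff_fg_span_finset_subset S).1 (hS ▸ Module.Finite.fg_top)
  have hsurj : Function.Surjective (Fintype.linearCombination R ((↑) : t → M)) := by
    rw [← span_range_eq_top_iff_surjective_fintypeLinearCombination, Subtype.range_coe, ← hspan,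
      hS]
  obtain ⟨s, hs⟩ := Module.projective_lifting_property _ LinearMap.id hsurj
  exact ⟨t, htS, s, LinearMap.congr_fun hs⟩

theorem isFixedPt_of_represents_invariant {T A : Type*} [AddCommGroup T] [AddCommGroup A]
    (h2A : ∀ a : A, a + a = 0 → a = 0) {g₂ : T →+ T →+ A} (hg₂ : Function.Injective g₂)
    {σ P : T → T} (hσ : ∀ y x, g₂ (σ y) x = g₂ y (σ x)) (hP : ∀ x, P x + P x = x + σ x)
    {φ : T →+ A} (hφ : ∀ x, φ (P x) = φ x) {y : T} (hy : ∀ x, g₂ y x = φ x) :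
    Function.IsFixedPt P y := by
  refine hg₂ (AddMonoidHom.ext fun x => sub_eq_zero.1 (h2A _ ?_))
  have h : g₂ (P y) x + g₂ (P y) x = g₂ y x + g₂ y x := by
    calc g₂ (P y) x + g₂ (P y) x = g₂ y x + g₂ y (σ x) := by
          rw [← AddMonoidHom.add_apply, ← map_add, hP, map_add, AddMonoidHom.add_apply, hσ]
      _ = φ (P x) + φ (P x) := by rw [hy, hy, ← map_add, ← map_add, hP]
      _ = g₂ y x + g₂ y x := by rw [hφ, hy]
  rw [sub_add_sub_comm, h, sub_self]

section

variable {A E T : Type*} [Ring A] [AddCommGroup E] [Module A E] [Module Aᵐᵒᵖ E]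
  [AddCommGroup T] [Module A T] [Module Aᵐᵒᵖ T]

variable (A E) in
def bimoduleCenter : Set E := {e | ∀ b : A, b • e = op b • e}

structure IsBimoduleMetric (g : E →+ E →ₗ[Aᵐᵒᵖ] A) : Prop where
  op_smul_left : ∀ (a : A) (e f : E), g (op a • e) f = g e (a • f)
  smul_left : ∀ (a : A) (e f : E), g (a • e) f = a * g e f
  comm_of_mem_center : ∀ ω ∈ bimoduleCenter A E, ∀ η ∈ bimoduleCenter A E, g ω η = g η ω
  bijective : Function.Bijective g

variable (A) in
/-- `tmul` models `E × E → E ⊗_A E`: it is balanced and generates `T`, so `T` is a quotient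
of `E ⊗_A E`. -/
structure IsGeneratingBalancedMap (tmul : E →+ E →+ T) : Prop where
  balanced : ∀ (a : A) (e f : E), tmul (op a • e) f = tmul e (a • f)
  smul_tmul : ∀ (a : A) (e f : E), a • tmul e f = tmul (a • e) f
  op_smul_tmul : ∀ (a : A) (e f : E), op a • tmul e f = tmul e (op a • f)
  closure_eq_top : AddSubgroup.closure {x | ∃ e f, tmul e f = x} = ⊤

variable (A) in
structure IsCanonicalFlip (tmul : E →+ E →+ T) (σ : T →+ T) : Prop where
  map_smul : ∀ (a : A) (x : T), σ (a • x) = a • σ x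
  map_op_smul : ∀ (a : A) (x : T), σ (op a • x) = op a • σ x
  tmul_of_mem_center : ∀ ω ∈ bimoduleCenter A E, ∀ η ∈ bimoduleCenter A E,
    σ (tmul ω η) = tmul η ω

structure IsInducedMetric (g : E →+ E →ₗ[Aᵐᵒᵖ] A) (tmul : E →+ E →+ T) (g₂ : T →+ T →+ A) :
    Prop where
  apply_tmul_tmul : ∀ e f e' f' : E, g₂ (tmul e f) (tmul e' f') = g e (g f e' • f')

namespace IsBimoduleMetric

variable {g : E →+ E →ₗ[Aᵐᵒᵖ] A}

theorem apply_smul_of_mem_center (hg : IsBimoduleMetric g) {η : E}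
    (hη : η ∈ bimoduleCenter A E) (a : A) (f : E) : g η (a • f) = a * g η f := by
  rw [← hg.op_smul_left, ← hη a, hg.smul_left]

theorem commute_of_mem_center (hg : IsBimoduleMetric g) {ω ω' : E}
    (hω : ω ∈ bimoduleCenter A E) (hω' : ω' ∈ bimoduleCenter A E) (b : A) :
    Commute b (g ω ω') := by
  rw [Commute, SemiconjBy, ← hg.smul_left, hω b, hg.op_smul_left, hω' b, LinearMap.map_smul]
  rfl

theorem apply_comm_of_mem_center (hg : IsBimoduleMetric g)
    (hcent : Submodule.span Aᵐᵒᵖ (bimoduleCenter A E) = ⊤) {η : E}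
    (hη : η ∈ bimoduleCenter A E) (e : E) : g η e = g e η := by
  have he : e ∈ Submodule.span Aᵐᵒᵖ (bimoduleCenter A E) := hcent ▸ Submodule.mem_top
  induction he using Submodule.span_induction with
  | mem ω hω => exact hg.comm_of_mem_center η hη ω hω
  | zero => simp
  | add e e' _ _ he he' => simp [he, he']
  | smul m e _ he =>
    induction m using MulOpposite.rec' with
    | h a => rw [LinearMap.map_smul, he, hg.op_smul_left, hη a, LinearMap.map_smul]

theorem exists_dual_family [Module.Finite Aᵐᵒᵖ E] [Module.Projective Aᵐᵒᵖ E]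
    (hg : IsBimoduleMetric g) (hcent : Submodule.span Aᵐᵒᵖ (bimoduleCenter A E) = ⊤) :
    ∃ t : Finset E, ↑t ⊆ bimoduleCenter A E ∧
      ∃ c : t → E, ∀ x, ∑ j, op (g (c j) x) • (j : E) = x := by
  obtain ⟨t, htc, s, hs⟩ := Module.exists_finset_dual_family hcent
  choose c hc using fun j : t =>
    hg.bijective.2 ((opLinearEquiv Aᵐᵒᵖ).symm.toLinearMap ∘ₗ LinearMap.proj j ∘ₗ s)
  exact ⟨t, htc, c, fun x => by simpa [hc] using hs x⟩

end IsBimoduleMetric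

namespace IsGeneratingBalancedMap

variable {tmul : E →+ E →+ T}

theorem hom_ext (ht : IsGeneratingBalancedMap A tmul) {M : Type*} [AddMonoid M] {F G : T →+ M}
    (h : ∀ e f, F (tmul e f) = G (tmul e f)) : F = G :=
  AddMonoidHom.eq_of_eqOn_dense ht.closure_eq_top (by rintro _ ⟨e, f, rfl⟩; exact h e f)

theorem hom_ext₂ (ht : IsGeneratingBalancedMap A tmul) {M : Type*} [AddCommMonoid M]
    {F G : T →+ T →+ M} (h : ∀ e f e' f', F (tmul e f) (tmul e' f') = G (tmul e f) (tmul e' f')) :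
    F = G :=
  ht.hom_ext fun e f => ht.hom_ext (h e f)

theorem tmul_eq_sum (ht : IsGeneratingBalancedMap A tmul) {t : Finset E}
    (htc : ↑t ⊆ bimoduleCenter A E) {a : t → E → A} (ha : ∀ x, ∑ j, op (a j x) • (j : E) = x)
    (e f : E) : tmul e f = ∑ j, tmul (op (a j f) • e) j := by
  conv_lhs => rw [← ha f]
  rw [map_sum]
  refine Finset.sum_congr rfl fun j _ => ?_
  rw [ht.balanced, htc j.2]

theorem closure_tmul_center_eq_top (ht : IsGeneratingBalancedMap A tmul) {t : Finset E}
    (htc : ↑t ⊆ bimoduleCenter A E) {a : t → E → A} (ha : ∀ x, ∑ j, op (a j x) • (j : E) = x) :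
    AddSubgroup.closure {x | ∃ e, ∃ η ∈ bimoduleCenter A E, tmul e η = x} = ⊤ := by
  refine eq_top_iff.2 (ht.closure_eq_top.ge.trans ((AddSubgroup.closure_le _).2 ?_))
  rintro _ ⟨e, f, rfl⟩
  rw [ht.tmul_eq_sum htc ha]
  exact AddSubgroup.sum_mem _ fun j _ => AddSubgroup.subset_closure ⟨_, j, htc j.2, rfl⟩

theorem span_tmul_center_eq_top (ht : IsGeneratingBalancedMap A tmul)
    (hcent : Submodule.span Aᵐᵒᵖ (bimoduleCenter A E) = ⊤) :
    Submodule.span Aᵐᵒᵖ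
      {x | ∃ ω ∈ bimoduleCenter A E, ∃ η ∈ bimoduleCenter A E, tmul ω η = x} = ⊤ := by
  set S := Submodule.span Aᵐᵒᵖ
    {x | ∃ ω ∈ bimoduleCenter A E, ∃ η ∈ bimoduleCenter A E, tmul ω η = x}
  have hE : ∀ e : E, e ∈ Submodule.span Aᵐᵒᵖ (bimoduleCenter A E) := fun e => hcent ▸ trivial
  have hleft : ∀ e η, η ∈ bimoduleCenter A E → tmul e η ∈ S := by
    intro e η hη
    induction hE e using Submodule.span_induction with
    | mem ω hω => exact Submodule.subset_span ⟨ω, hω, η, hη, rfl⟩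
    | zero => simp
    | add e e' _ _ he he' => simpa using S.add_mem he he'
    | smul m e _ he =>
      induction m using MulOpposite.rec' with
      | h a => simpa [ht.balanced, hη a, ← ht.op_smul_tmul] using S.smul_mem (op a) he
  refine eq_top_iff.2 fun x _ => ?_
  refine (ht.closure_eq_top.ge.trans ((AddSubgroup.closure_le S.toAddSubgroup).2 ?_)) trivial
  rintro _ ⟨e, f, rfl⟩
  induction hE f using Submodule.span_induction with
  | mem η hη => exact hleft e η hη
  | zero => simp
  | add f f' _ _ hf hf' => simpa using S.add_mem hf hf'
  | smul m f _ hf =>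
    induction m using MulOpposite.rec' with
    | h a => simpa [← ht.op_smul_tmul] using S.smul_mem (op a) hf

end IsGeneratingBalancedMap

theorem IsBimoduleMetric.exists_represents_comp_tmul {g : E →+ E →ₗ[Aᵐᵒᵖ] A}
    (hg : IsBimoduleMetric g) {tmul : E →+ E →+ T} (ht : IsGeneratingBalancedMap A tmul)
    (ψ : T →+ A) (hψ : ∀ (a : A) (x : T), ψ (op a • x) = ψ x * a) :
    ∃ w : E → E, ∀ e f, g (w e) f = ψ (tmul e f) := by
  choose w hw using fun e => hg.bijective.2
    { toFun := fun f => ψ (tmul e f)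
      map_add' := by simp
      map_smul' := fun m f => by
        induction m using MulOpposite.rec' with
        | h a => simp [← ht.op_smul_tmul, hψ, MulOpposite.smul_eq_mul_unop] }
  exact ⟨w, fun e f => LinearMap.congr_fun (hw e) f⟩

namespace IsInducedMetric

variable {g : E →+ E →ₗ[Aᵐᵒᵖ] A} {tmul : E →+ E →+ T} {g₂ : T →+ T →+ A}

theorem apply_op_smul [SMulCommClass A Aᵐᵒᵖ E] (hg₂ : IsInducedMetric g tmul g₂)
    (ht : IsGeneratingBalancedMap A tmul) (y : T) (a : A) (x : T) :
    g₂ y (op a • x) = g₂ y x * a := by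
  have h : g₂.compl₂ (DistribSMul.toAddMonoidHom T (op a)) =
      g₂.compr₂ (AddMonoidHom.mulRight a) := ht.hom_ext₂ fun u v e f => by
    rw [AddMonoidHom.compl₂_apply, AddMonoidHom.compr₂_apply, DistribSMul.toAddMonoidHom_apply,
      ht.op_smul_tmul, hg₂.apply_tmul_tmul, hg₂.apply_tmul_tmul, smul_comm, LinearMap.map_smul]
    rfl
  exact DFunLike.congr_fun (DFunLike.congr_fun h y) x

theorem op_smul_apply (hg₂ : IsInducedMetric g tmul g₂) (hg : IsBimoduleMetric g)
    (ht : IsGeneratingBalancedMap A tmul) (a : A) (y x : T) :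
    g₂ (op a • y) x = g₂ y (a • x) := by
  have h : g₂.comp (DistribSMul.toAddMonoidHom T (op a)) =
      g₂.compl₂ (DistribSMul.toAddMonoidHom T a) := ht.hom_ext₂ fun u v e f => by
    simp [ht.op_smul_tmul, ht.smul_tmul, hg₂.apply_tmul_tmul, hg.op_smul_left]
  exact DFunLike.congr_fun (DFunLike.congr_fun h y) x

theorem sum_tmul_eq_self (hg₂ : IsInducedMetric g tmul g₂) (hg : IsBimoduleMetric g)
    (ht : IsGeneratingBalancedMap A tmul)
    (hcent : Submodule.span Aᵐᵒᵖ (bimoduleCenter A E) = ⊤) {t : Finset E}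
    (htc : ↑t ⊆ bimoduleCenter A E) {c : t → E} (hc : ∀ x, ∑ j, op (g (c j) x) • (j : E) = x)
    {D : T → E → E} (hD : ∀ y e f, g (D y e) f = g₂ y (tmul e f)) (y : T) :
    ∑ j, tmul (D y (c j)) j = y := by
  have hD_add : ∀ y y' e, D (y + y') e = D y e + D y' e := fun y y' e =>
    hg.bijective.1 (LinearMap.ext fun f => by simp [hD])
  have hD_tmul : ∀ u v e, D (tmul u v) e = op (g v e) • u := fun u v e =>
    hg.bijective.1 (LinearMap.ext fun f => by rw [hD, hg₂.apply_tmul_tmul, hg.op_smul_left])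
  let R : T →+ T := AddMonoidHom.mk' (fun y => ∑ j, tmul (D y (c j)) j) fun y y' => by
    simp [hD_add, Finset.sum_add_distrib]
  suffices R = AddMonoidHom.id T from DFunLike.congr_fun this y
  refine AddMonoidHom.eq_of_eqOn_dense (ht.closure_tmul_center_eq_top htc hc) ?_
  rintro _ ⟨u, η, hη, rfl⟩
  show ∑ j, tmul (D (tmul u η) (c j)) j = tmul u η
  simp only [hD_tmul, hg.apply_comm_of_mem_center hcent hη]
  exact (ht.tmul_eq_sum htc hc u η).symm

theorem flip_selfAdjoint [SMulCommClass A Aᵐᵒᵖ E] (hg₂ : IsInducedMetric g tmul g₂)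
    (hg : IsBimoduleMetric g) (ht : IsGeneratingBalancedMap A tmul)
    (hcent : Submodule.span Aᵐᵒᵖ (bimoduleCenter A E) = ⊤) {σ : T →+ T}
    (hσ : IsCanonicalFlip A tmul σ) (y x : T) : g₂ (σ y) x = g₂ y (σ x) := by
  have hT : ∀ z : T, z ∈ Submodule.span Aᵐᵒᵖ
      {x | ∃ ω ∈ bimoduleCenter A E, ∃ η ∈ bimoduleCenter A E, tmul ω η = x} :=
    fun z => ht.span_tmul_center_eq_top hcent ▸ trivial
  induction hT y using Submodule.span_induction generalizing x with
  | mem _ hy =>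
    obtain ⟨ω, hω, η, hη, rfl⟩ := hy
    induction hT x using Submodule.span_induction with
    | mem _ hx =>
      obtain ⟨ω', hω', η', hη', rfl⟩ := hx
      rw [hσ.tmul_of_mem_center ω hω η hη, hσ.tmul_of_mem_center ω' hω' η' hη',
        hg₂.apply_tmul_tmul, hg₂.apply_tmul_tmul, hg.apply_smul_of_mem_center hη,
        hg.apply_smul_of_mem_center hω]
      exact (hg.commute_of_mem_center hω hω' _).symm
    | zero => simp
    | add x x' _ _ hx hx' => simp [hx, hx']
    | smul m x _ hx =>
      induction m using MulOpposite.rec' with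
      | h a => rw [hg₂.apply_op_smul ht, hx, hσ.map_op_smul, hg₂.apply_op_smul ht]
  | zero => simp
  | add y y' _ _ hy hy' => simp [hy, hy']
  | smul m y _ hy =>
    induction m using MulOpposite.rec' with
    | h a => rw [hσ.map_op_smul, hg₂.op_smul_apply hg ht, hy, hσ.map_smul,
      hg₂.op_smul_apply hg ht]

variable [Module.Finite Aᵐᵒᵖ E] [Module.Projective Aᵐᵒᵖ E]

theorem injective [SMulCommClass A Aᵐᵒᵖ E] (hg₂ : IsInducedMetric g tmul g₂)
    (hg : IsBimoduleMetric g) (ht : IsGeneratingBalancedMap A tmul)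
    (hcent : Submodule.span Aᵐᵒᵖ (bimoduleCenter A E) = ⊤) : Function.Injective g₂ := by
  obtain ⟨t, htc, c, hc⟩ := hg.exists_dual_family hcent
  choose D hD using fun y => hg.exists_represents_comp_tmul ht (g₂ y) (hg₂.apply_op_smul ht y)
  intro y y' h
  have hDD : D y = D y' :=
    funext fun e => hg.bijective.1 (LinearMap.ext fun f => by rw [hD, hD, h])
  rw [← hg₂.sum_tmul_eq_self hg ht hcent htc hc hD y,
    ← hg₂.sum_tmul_eq_self hg ht hcent htc hc hD y', hDD]

theorem exists_apply_eq (hg₂ : IsInducedMetric g tmul g₂) (hg : IsBimoduleMetric g)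
    (ht : IsGeneratingBalancedMap A tmul)
    (hcent : Submodule.span Aᵐᵒᵖ (bimoduleCenter A E) = ⊤) (φ : T →ₗ[Aᵐᵒᵖ] A) :
    ∃ y, ∀ x, g₂ y x = φ x := by
  obtain ⟨t, htc, c, hc⟩ := hg.exists_dual_family hcent
  obtain ⟨w, hw⟩ := hg.exists_represents_comp_tmul ht φ.toAddMonoidHom
    fun a x => φ.map_smul (op a) x
  refine ⟨∑ j : t, tmul (w j) (c j), fun x => DFunLike.congr_fun (ht.hom_ext (F := g₂ _)
    (G := φ.toAddMonoidHom) fun e f => ?_) x⟩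
  calc g₂ (∑ j : t, tmul (w j) (c j)) (tmul e f) = ∑ j : t, φ (tmul j (g (c j) e • f)) := by
        simp [hg₂.apply_tmul_tmul, hw]
    _ = φ (tmul (∑ j, op (g (c j) e) • (j : E)) f) := by
        simp [ht.balanced]
    _ = φ (tmul e f) := by rw [hc e]

end IsInducedMetric

end

theorem Vg2_restricts_to_iso_on_Sym_general
    {A E T : Type*} [Ring A] [AddCommGroup E] [Module A E] [Module Aᵐᵒᵖ E]
    [SMulCommClass A Aᵐᵒᵖ E]
    [AddCommGroup T] [Module A T] [Module Aᵐᵒᵖ T]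
    [Module.Finite Aᵐᵒᵖ E] [Module.Projective Aᵐᵒᵖ E]
    (h2A : ∀ a : A, a + a = 0 → a = 0)
    (hcent : Submodule.span Aᵐᵒᵖ {e : E | ∀ b : A, b • e = op b • e} = ⊤)
    (tmul : E → E → T)
    (htl : ∀ e e' f : E, tmul (e + e') f = tmul e f + tmul e' f)
    (htr : ∀ e f f' : E, tmul e (f + f') = tmul e f + tmul e f')
    (htbal : ∀ (a : A) (e f : E), tmul (op a • e) f = tmul e (a • f))
    (htA : ∀ (a : A) (e f : E), a • tmul e f = tmul (a • e) f)
    (htAop : ∀ (a : A) (e f : E), op a • tmul e f = tmul e (op a • f))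
    (huniv : ∀ (P : Type*) [AddCommGroup P] (φ : E → E → P),
      (∀ e e' f : E, φ (e + e') f = φ e f + φ e' f) →
      (∀ e f f' : E, φ e (f + f') = φ e f + φ e f') →
      (∀ (a : A) (e f : E), φ (op a • e) f = φ e (a • f)) →
      ∃! Φ : T →+ P, ∀ e f : E, Φ (tmul e f) = φ e f)
    (σ : T → T)
    (hσadd : ∀ x y : T, σ (x + y) = σ x + σ y)
    (hσA : ∀ (a : A) (x : T), σ (a • x) = a • σ x)
    (hσAop : ∀ (a : A) (x : T), σ (op a • x) = op a • σ x)
    (hσflip : ∀ ω η : E, (∀ b : A, b • ω = op b • ω) → (∀ b : A, b • η = op b • η) →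
        σ (tmul ω η) = tmul η ω)
    (Psym : T → T)
    (hP2 : ∀ x : T, Psym x + Psym x = x + σ x)
    (g : E → E → A)
    (hgaddl : ∀ e e' f, g (e + e') f = g e f + g e' f)
    (hgaddr : ∀ e f f', g e (f + f') = g e f + g e f')
    (hgbal : ∀ (a : A) (e f : E), g (op a • e) f = g e (a • f))
    (hgA : ∀ (a : A) (e f : E), g (a • e) f = a * g e f)
    (hgAop : ∀ (a : A) (e f : E), g e (op a • f) = g e f * a)
    (hgsym : ∀ ω η : E, (∀ b : A, b • ω = op b • ω) → (∀ b : A, b • η = op b • η) →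
      ∀ a : A, g ω (op a • η) = g η (op a • ω))
    (hgnondeg : ∀ φ : E →ₗ[Aᵐᵒᵖ] A, ∃! e : E, ∀ f, g e f = φ f)
    (g2 : T → T → A)
    (hg2addl : ∀ x x' y : T, g2 (x + x') y = g2 x y + g2 x' y)
    (hg2addr : ∀ x y y' : T, g2 x (y + y') = g2 x y + g2 x y')
    (hg2def : ∀ e f e' f' : E,
      g2 (tmul e f) (tmul e' f') = g e ((g f e') • f')) :
    ∀ φ : T →ₗ[Aᵐᵒᵖ] A, (∀ x : T, φ (Psym x) = φ x) →
      ∃! y : T, Psym y = y ∧ ∀ x : T, g2 y x = φ x := by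
  intro φ hφ
  let tmulₗ : E →+ E →+ T :=
    .mk' (fun e => .mk' (tmul e) (htr e)) fun e e' => AddMonoidHom.ext (htl e e')
  let gₗ : E →+ E →ₗ[Aᵐᵒᵖ] A :=
    .mk' (fun e => ⟨⟨g e, hgaddr e⟩, fun m f => hgAop m.unop e f⟩) fun e e' =>
      LinearMap.ext (hgaddl e e')
  let g₂ : T →+ T →+ A :=
    .mk' (fun x => .mk' (g2 x) (hg2addr x)) fun x x' => AddMonoidHom.ext (hg2addl x x')
  have ht : IsGeneratingBalancedMap A tmulₗ := ⟨htbal, htA, htAop,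
    AddSubgroup.closure_eq_top_of_forall_hom_eq_zero fun c hc =>
      (huniv _ (fun _ _ => 0) (by simp) (by simp) (by simp)).unique
        (fun e f => hc _ ⟨e, f, rfl⟩) fun _ _ => rfl⟩
  have hg : IsBimoduleMetric gₗ := ⟨hgbal, hgA,
    fun ω hω η hη => (by simpa using hgsym ω η hω hη 1 : g ω η = g η ω),
    (Function.bijective_iff_existsUnique _).2 fun ψ => by
      obtain ⟨e, he, huniq⟩ := hgnondeg ψ
      exact ⟨e, LinearMap.ext he, fun e' h => huniq e' (LinearMap.congr_fun h)⟩⟩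
  have hg₂ : IsInducedMetric gₗ tmulₗ g₂ := ⟨hg2def⟩
  have hσ : IsCanonicalFlip A tmulₗ (.mk' σ hσadd) :=
    ⟨hσA, hσAop, fun ω hω η hη => hσflip ω η hω hη⟩
  obtain ⟨y, hy⟩ := hg₂.exists_apply_eq hg ht hcent φ
  have hinj := hg₂.injective hg ht hcent
  refine ⟨y, ⟨isFixedPt_of_represents_invariant h2A hinj (hg₂.flip_selfAdjoint hg ht hcent hσ)
    hP2 (φ := φ.toAddMonoidHom) hφ hy, hy⟩, fun y' hy' => hinj ?_⟩
  exact AddMonoidHom.ext fun x => (hy'.2 x).trans (hy x).symm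

/-- Let `E` be a centered `A`-`A`-bimodule, finitely generated projective
as a right `A`-module, `g` a pseudo-Riemannian bilinear metric on `E`, `σ` the canonical
flip on `E ⊗_A E` and `P_sym = (1+σ)/2` (characterized by `2·P_sym = 1 + σ` and
idempotency) with `Sym := Ran(P_sym)` (the fixed points of `P_sym`).  Then `V_{g⁽²⁾}`
restricts to an isomorphism from `Sym` onto `Sym*`, the latter identified with
`{φ ∈ (E ⊗_A E)* : φ ∘ (1 − P_sym) = 0}`: for every right `A`-linear functional `φ` on
`E ⊗_A E` vanishing on `Ran(1 − P_sym)` there is a unique `y` with `P_sym y = y` and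
`g⁽²⁾(y ⊗ ·) = φ`.  Here `T` with `tmul` plays the role of `E ⊗_A E`. -/
theorem Vg2_restricts_to_iso_on_Sym
    {A E T : Type*} [Ring A] [AddCommGroup E] [Module A E] [Module Aᵐᵒᵖ E]
    [SMulCommClass A Aᵐᵒᵖ E]
    [AddCommGroup T] [Module A T] [Module Aᵐᵒᵖ T] [SMulCommClass A Aᵐᵒᵖ T]
    [Module.Finite Aᵐᵒᵖ E] [Module.Projective Aᵐᵒᵖ E]
    (h2A : ∀ a : A, a + a = 0 → a = 0)
    (h2T : ∀ x : T, x + x = 0 → x = 0)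
    (hcent : Submodule.span Aᵐᵒᵖ {e : E | ∀ b : A, b • e = op b • e} = ⊤)
    (tmul : E → E → T)
    (htl : ∀ e e' f : E, tmul (e + e') f = tmul e f + tmul e' f)
    (htr : ∀ e f f' : E, tmul e (f + f') = tmul e f + tmul e f')
    (htbal : ∀ (a : A) (e f : E), tmul (op a • e) f = tmul e (a • f))
    (htA : ∀ (a : A) (e f : E), a • tmul e f = tmul (a • e) f)
    (htAop : ∀ (a : A) (e f : E), op a • tmul e f = tmul e (op a • f))
    (huniv : ∀ (P : Type*) [AddCommGroup P] (φ : E → E → P),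
      (∀ e e' f : E, φ (e + e') f = φ e f + φ e' f) →
      (∀ e f f' : E, φ e (f + f') = φ e f + φ e f') →
      (∀ (a : A) (e f : E), φ (op a • e) f = φ e (a • f)) →
      ∃! Φ : T →+ P, ∀ e f : E, Φ (tmul e f) = φ e f)
    (σ : T → T)
    (hσadd : ∀ x y : T, σ (x + y) = σ x + σ y)
    (hσA : ∀ (a : A) (x : T), σ (a • x) = a • σ x)
    (hσAop : ∀ (a : A) (x : T), σ (op a • x) = op a • σ x)
    (hσflip : ∀ ω η : E, (∀ b : A, b • ω = op b • ω) → (∀ b : A, b • η = op b • η) →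
        σ (tmul ω η) = tmul η ω)
    (hσinv : ∀ x : T, σ (σ x) = x)
    (Psym : T → T)
    (hPadd : ∀ x y : T, Psym (x + y) = Psym x + Psym y)
    (hP2 : ∀ x : T, Psym x + Psym x = x + σ x)
    (hPidem : ∀ x : T, Psym (Psym x) = Psym x)
    (g : E → E → A)
    (hgaddl : ∀ e e' f, g (e + e') f = g e f + g e' f)
    (hgaddr : ∀ e f f', g e (f + f') = g e f + g e f')
    (hgbal : ∀ (a : A) (e f : E), g (op a • e) f = g e (a • f))
    (hgA : ∀ (a : A) (e f : E), g (a • e) f = a * g e f)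
    (hgAop : ∀ (a : A) (e f : E), g e (op a • f) = g e f * a)
    (hgsym : ∀ ω η : E, (∀ b : A, b • ω = op b • ω) → (∀ b : A, b • η = op b • η) →
      ∀ a : A, g ω (op a • η) = g η (op a • ω))
    (hgnondeg : ∀ φ : E →ₗ[Aᵐᵒᵖ] A, ∃! e : E, ∀ f, g e f = φ f)
    (g2 : T → T → A)
    (hg2addl : ∀ x x' y : T, g2 (x + x') y = g2 x y + g2 x' y)
    (hg2addr : ∀ x y y' : T, g2 x (y + y') = g2 x y + g2 x y')
    (hg2def : ∀ e f e' f' : E,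
      g2 (tmul e f) (tmul e' f') = g e ((g f e') • f')) :
    ∀ φ : T →ₗ[Aᵐᵒᵖ] A, (∀ x : T, φ (Psym x) = φ x) →
      ∃! y : T, Psym y = y ∧ ∀ x : T, g2 y x = φ x :=
  Vg2_restricts_to_iso_on_Sym_general h2A hcent tmul htl htr htbal htA htAop huniv σ hσadd hσA hσAop
    hσflip Psym hP2 g hgaddl hgaddr hgbal hgA hgAop hgsym hgnondeg g2 hg2addl hg2addr hg2def
end

section
/- Let D be an algebra with a 𝕋ⁿ-action α and F an equivariant D-bimodule, with spectral subspaces F_m and D_m for m ∈ ℤⁿ. Suppose that for each m ∈ ℤⁿ there exist a₁,…,a_k ∈ D_m and b₁,…,b_k ∈ D_{−m} with Σᵢ bᵢaᵢ = 1, and F is the span of its spectral subspaces. Then the multiplication map F₀ ⊗_{D₀} D → F, e ⊗ a ↦ ea, is bijective. -/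
/-!
For each degree `m`, a partition of unity `∑ bᵢ aᵢ = 1` with `aᵢ ∈ D_m`, `bᵢ ∈ D_{-m}` gives a map
`F_m → F₀ ⊗_{D₀} D`, `g ↦ ∑ (g bᵢ) ⊗ aᵢ`, and these glue along `F = ⨁ F_m` to a map `w`.
Then `u ∘ w = id` since `∑ bᵢ aᵢ = 1`, and `w (f d) = f ⊗ d` for homogeneous `d` since `d bᵢ ∈ D₀`
moves across the tensor sign; so `w ∘ u` fixes the pure tensors, which generate `T`.
-/

open MulOpposite

universe w

-- Characters into `ℚ/ℤ` separate points, and lifting them lets them land in any universe.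
theorem AddSubgroup.closure_eq_top_of_eqOn_imp_eq {T : Type*} [AddCommGroup T] {S : Set T}
    (h : ∀ χ₁ χ₂ : T →+ ULift.{w} (AddCircle (1 : ℚ)), S.EqOn χ₁ χ₂ → χ₁ = χ₂) :
    AddSubgroup.closure S = ⊤ := by
  refine (eq_top_iff' _).2 fun t => by_contra fun ht => ?_
  obtain ⟨c, hc⟩ := CharacterModule.exists_character_apply_ne_zero_of_ne_zero
    ((QuotientAddGroup.eq_zero_iff t).not.2 ht)
  let χ : T →+ AddCircle (1 : ℚ) := AddMonoidHom.comp c (QuotientAddGroup.mk' _)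
  have hχ (x : T) : χ x = c x := rfl
  have hχ0 := h (AddEquiv.ulift.symm.toAddMonoidHom.comp χ) 0 fun s hs => by
    simp [hχ, (QuotientAddGroup.eq_zero_iff s).2 (AddSubgroup.subset_closure hs)]
  exact hc (by simpa [hχ] using congr($hχ0 t))

theorem Submodule.addMonoidHom_ext_of_iSup_eq_top {ι R M N : Type*} [Semiring R]
    [AddCommMonoid M] [Module R M] [AddMonoid N] {A : ι → Submodule R M} (hA : iSup A = ⊤)
    {f g : M →+ N} (hfg : ∀ i, ∀ x ∈ A i, f x = g x) : f = g :=
  AddMonoidHom.ext fun x => Submodule.iSup_induction A (motive := fun x => f x = g x)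
    (hA ▸ Submodule.mem_top) hfg (by simp only [map_zero]) fun x y hx hy => by
      simp only [map_add, hx, hy]

theorem DirectSum.IsInternal.exists_addMonoidHom_eq {ι M N S : Type*} [DecidableEq ι]
    [AddCommMonoid M] [AddCommMonoid N] [SetLike S M] [AddSubmonoidClass S M] {A : ι → S}
    (hA : DirectSum.IsInternal A) (φ : ∀ i, A i →+ N) :
    ∃ v : M →+ N, ∀ i (x : A i), v x = φ i x := by
  let e := AddEquiv.ofBijective (DirectSum.coeAddMonoidHom A) hA
  refine ⟨(DirectSum.toAddMonoid φ).comp e.symm.toAddMonoidHom, fun i x => ?_⟩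
  have hx : e.symm x = DirectSum.of (fun i => A i) i x :=
    e.symm_apply_eq.2 (DirectSum.coeAddMonoidHom_of A i x).symm
  simp [hx]

section Balanced

variable {D F P Q : Type*} [Ring D] [AddCommGroup F] [Module Dᵐᵒᵖ F]
  [AddCommGroup P] [AddCommGroup Q] {E : Submodule ℤ F}

/-- `f' = f z` is stated in `F` because `E` need not be stable under the right action. -/
structure IsBalanced (R : Set D) (φ : E → D → P) : Prop where
  map_add_left : ∀ (f f' : E) (d : D), φ (f + f') d = φ f d + φ f' d
  map_add_right : ∀ (f : E) (d d' : D), φ f (d + d') = φ f d + φ f d'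
  map_smul_mul : ∀ (f f' : E) (z d : D), z ∈ R → (f' : F) = op z • (f : F) → φ f' d = φ f (z * d)

namespace IsBalanced

variable {R : Set D} {φ : E → D → P}

theorem comp (hφ : IsBalanced R φ) (χ : P →+ Q) : IsBalanced R fun f d => χ (φ f d) where
  map_add_left f f' d := by rw [hφ.map_add_left, map_add]
  map_add_right f d d' := by rw [hφ.map_add_right, map_add]
  map_smul_mul f f' z d hz hf := by rw [hφ.map_smul_mul f f' z d hz hf]

def addMonoidHomRight (hφ : IsBalanced R φ) (f : E) : D →+ P :=
  AddMonoidHom.mk' (φ f) (hφ.map_add_right f)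

@[simp]
theorem addMonoidHomRight_apply (hφ : IsBalanced R φ) (f : E) (d : D) :
    hφ.addMonoidHomRight f d = φ f d := rfl

end IsBalanced

end Balanced

section Spectral

variable {ι D F T : Type*} [AddGroup ι] [Ring D] [AddCommGroup F] [Module Dᵐᵒᵖ F]
  [AddCommGroup T] {𝒜 : ι → Submodule ℤ D} {ℬ : ι → Submodule ℤ F}

theorem exists_section_of_sum_mul_eq_one
    (hmul : ∀ (m k : ι), ∀ a ∈ 𝒜 m, ∀ b ∈ 𝒜 k, a * b ∈ 𝒜 (m + k))
    (hsmulR : ∀ (m k : ι), ∀ f ∈ ℬ m, ∀ d ∈ 𝒜 k, op d • f ∈ ℬ (m + k))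
    {tmul : ℬ 0 → D → T} (htmul : IsBalanced (𝒜 0) tmul) {u : T →+ F}
    (hu : ∀ (f : ℬ 0) (d : D), u (tmul f d) = op d • (f : F))
    {m : ι} {k : ℕ} {a b : Fin k → D} (hb : ∀ i, b i ∈ 𝒜 (-m)) (hab : ∑ i, b i * a i = 1) :
    ∃ v : ℬ m →+ T, (∀ g, u (v g) = g) ∧
      ∀ (f : ℬ 0) (d : D) (g : ℬ m), d ∈ 𝒜 m → (g : F) = op d • (f : F) → v g = tmul f d := by
  have hgb (g : ℬ m) (i : Fin k) : op (b i) • (g : F) ∈ ℬ 0 := by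
    simpa using hsmulR m (-m) g g.2 (b i) (hb i)
  let v : ℬ m →+ T := AddMonoidHom.mk' (fun g => ∑ i, tmul ⟨_, hgb g i⟩ (a i)) fun g g' => by
    simp only [← Finset.sum_add_distrib, ← htmul.map_add_left]
    congr! 2 with i
    simp [smul_add]
  refine ⟨v, fun g => ?_, fun f d g hd hg => ?_⟩
  · calc u (v g) = ∑ i, op (b i * a i) • (g : F) := by
          simp [v, hu, smul_smul]
      _ = g := by rw [← Finset.sum_smul, ← Finset.op_sum, hab, op_one, one_smul]
  · have hdb (i : Fin k) : d * b i ∈ 𝒜 0 := by simpa using hmul m (-m) d hd (b i) (hb i)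
    calc v g = ∑ i, tmul ⟨_, hgb g i⟩ (a i) := rfl
      _ = ∑ i, tmul f (d * b i * a i) := Finset.sum_congr rfl fun i _ =>
          htmul.map_smul_mul _ _ _ _ (hdb i) (by simp [hg, smul_smul])
      _ = htmul.addMonoidHomRight f (∑ i, d * b i * a i) := by simp
      _ = tmul f d := by simp only [mul_assoc, ← Finset.mul_sum, hab, mul_one]; rfl

end Spectral

theorem spectral_multiplication_map_bijective_general
    {n : ℕ} {D F T : Type*} [Ring D]
    [AddCommGroup F] [Module Dᵐᵒᵖ F]
    [AddCommGroup T]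
    (𝒜 : (Fin n → ℤ) → Submodule ℤ D) (ℬ : (Fin n → ℤ) → Submodule ℤ F)
    (hDinternal : DirectSum.IsInternal 𝒜) (hFinternal : DirectSum.IsInternal ℬ)
    (hmul : ∀ (m k : Fin n → ℤ), ∀ a ∈ 𝒜 m, ∀ b ∈ 𝒜 k, a * b ∈ 𝒜 (m + k))
    (hsmulR : ∀ (m k : Fin n → ℤ), ∀ f ∈ ℬ m, ∀ d ∈ 𝒜 k, op d • f ∈ ℬ (m + k))
    (hpart : ∀ m : Fin n → ℤ, ∃ (k : ℕ) (a b : Fin k → D),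
      (∀ i, a i ∈ 𝒜 m) ∧ (∀ i, b i ∈ 𝒜 (-m)) ∧ (∑ i, b i * a i) = 1)
    (tmul : ℬ 0 → D → T)
    (htl : ∀ (f f' : ℬ 0) (d : D), tmul (f + f') d = tmul f d + tmul f' d)
    (htr : ∀ (f : ℬ 0) (d d' : D), tmul f (d + d') = tmul f d + tmul f d')
    (htbal : ∀ (f f' : ℬ 0) (z d : D), z ∈ 𝒜 0 → (f' : F) = op z • (f : F) →
      tmul f' d = tmul f (z * d))
    (huniv : ∀ (P : Type*) [AddCommGroup P] (φ : ℬ 0 → D → P),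
      (∀ (f f' : ℬ 0) (d : D), φ (f + f') d = φ f d + φ f' d) →
      (∀ (f : ℬ 0) (d d' : D), φ f (d + d') = φ f d + φ f d') →
      (∀ (f f' : ℬ 0) (z d : D), z ∈ 𝒜 0 → (f' : F) = op z • (f : F) →
        φ f' d = φ f (z * d)) →
      ∃! Φ : T →+ P, ∀ (f : ℬ 0) (d : D), Φ (tmul f d) = φ f d)
    (u : T →+ F)
    (hu : ∀ (f : ℬ 0) (d : D), u (tmul f d) = op d • (f : F)) :
    Function.Bijective u := by
  have htmul : IsBalanced (𝒜 0 : Set D) tmul := ⟨htl, htr, htbal⟩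
  have hgen : AddSubgroup.closure (Set.range (Function.uncurry tmul)) = ⊤ :=
    AddSubgroup.closure_eq_top_of_eqOn_imp_eq fun χ₁ χ₂ hχ =>
      let hχ₂ := htmul.comp χ₂
      (huniv _ _ hχ₂.map_add_left hχ₂.map_add_right hχ₂.map_smul_mul).unique (fun f d => hχ ⟨(f, d), rfl⟩) fun _ _ => rfl
  choose k a b _ hb hab using hpart
  choose v huv hvt using fun m =>
    exists_section_of_sum_mul_eq_one hmul hsmulR htmul hu (hb m) (hab m)
  obtain ⟨w, hw⟩ := hFinternal.exists_addMonoidHom_eq v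
  have huw : u.comp w = AddMonoidHom.id F :=
    Submodule.addMonoidHom_ext_of_iSup_eq_top hFinternal.submodule_iSup_eq_top fun m g hg => by
      simpa [hw m ⟨g, hg⟩] using huv m ⟨g, hg⟩
  have hw_smul (f : ℬ 0) : w.comp (AddMonoidHom.mk' (fun d : D => op d • (f : F))
      fun d d' => by simp [add_smul]) = htmul.addMonoidHomRight f :=
    Submodule.addMonoidHom_ext_of_iSup_eq_top hDinternal.submodule_iSup_eq_top fun m d hd => by
      have hdf : op d • (f : F) ∈ ℬ m := by simpa using hsmulR 0 m f f.2 d hd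
      simpa [hw m ⟨_, hdf⟩] using hvt m f d ⟨_, hdf⟩ hd rfl
  have hwu : w.comp u = AddMonoidHom.id T := by
    refine AddMonoidHom.eq_of_eqOn_dense hgen ?_
    rintro _ ⟨⟨f, d⟩, rfl⟩
    simpa [hu] using congr($(hw_smul f) d)
  exact ⟨Function.LeftInverse.injective (g := w) fun t => congr($hwu t),
    Function.RightInverse.surjective (g := w) fun g => congr($huw g)⟩

/-- Let `D` be an algebra with a `𝕋ⁿ`-action and `F` an equivariant
`D`-bimodule.  The action is encoded through its spectral (isotypical) decompositions:
gradings `𝒜 : ℤⁿ → Submodule ℤ D` and `ℬ : ℤⁿ → Submodule ℤ F` forming internal direct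
sums (`D` and `F` are the spans of their spectral subspaces, and these are independent),
with `1 ∈ 𝒜 0`, `𝒜_m·𝒜_k ⊆ 𝒜_{m+k}`, `𝒜_k·ℬ_m ⊆ ℬ_{m+k}` and `ℬ_m·𝒜_k ⊆ ℬ_{m+k}`.
Suppose that for each `m ∈ ℤⁿ` there exist `a₁,…,a_k ∈ D_m` and `b₁,…,b_k ∈ D_{−m}`
with `Σᵢ bᵢaᵢ = 1`.  Then the multiplication map `F₀ ⊗_{D₀} D → F`, `e ⊗ a ↦ ea`, is
bijective.  Here `T` with the `D₀`-balanced biadditive map `tmul : F₀ × D → T`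
satisfying the universal property plays the role of `F₀ ⊗_{D₀} D`, and `u` is the
induced multiplication map. -/
theorem spectral_multiplication_map_bijective
    {n : ℕ} {D F T : Type*} [Ring D]
    [AddCommGroup F] [Module D F] [Module Dᵐᵒᵖ F] [SMulCommClass D Dᵐᵒᵖ F]
    [AddCommGroup T]
    (𝒜 : (Fin n → ℤ) → Submodule ℤ D) (ℬ : (Fin n → ℤ) → Submodule ℤ F)
    (hDinternal : DirectSum.IsInternal 𝒜) (hFinternal : DirectSum.IsInternal ℬ)
    (hone : (1 : D) ∈ 𝒜 0)
    (hmul : ∀ (m k : Fin n → ℤ), ∀ a ∈ 𝒜 m, ∀ b ∈ 𝒜 k, a * b ∈ 𝒜 (m + k))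
    (hsmulL : ∀ (m k : Fin n → ℤ), ∀ d ∈ 𝒜 k, ∀ f ∈ ℬ m, d • f ∈ ℬ (m + k))
    (hsmulR : ∀ (m k : Fin n → ℤ), ∀ f ∈ ℬ m, ∀ d ∈ 𝒜 k, op d • f ∈ ℬ (m + k))
    (hpart : ∀ m : Fin n → ℤ, ∃ (k : ℕ) (a b : Fin k → D),
      (∀ i, a i ∈ 𝒜 m) ∧ (∀ i, b i ∈ 𝒜 (-m)) ∧ (∑ i, b i * a i) = 1)
    (tmul : ℬ 0 → D → T)
    (htl : ∀ (f f' : ℬ 0) (d : D), tmul (f + f') d = tmul f d + tmul f' d)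
    (htr : ∀ (f : ℬ 0) (d d' : D), tmul f (d + d') = tmul f d + tmul f d')
    (htbal : ∀ (f f' : ℬ 0) (z d : D), z ∈ 𝒜 0 → (f' : F) = op z • (f : F) →
      tmul f' d = tmul f (z * d))
    (huniv : ∀ (P : Type*) [AddCommGroup P] (φ : ℬ 0 → D → P),
      (∀ (f f' : ℬ 0) (d : D), φ (f + f') d = φ f d + φ f' d) →
      (∀ (f : ℬ 0) (d d' : D), φ f (d + d') = φ f d + φ f d') →
      (∀ (f f' : ℬ 0) (z d : D), z ∈ 𝒜 0 → (f' : F) = op z • (f : F) →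
        φ f' d = φ f (z * d)) →
      ∃! Φ : T →+ P, ∀ (f : ℬ 0) (d : D), Φ (tmul f d) = φ f d)
    (u : T →+ F)
    (hu : ∀ (f : ℬ 0) (d : D), u (tmul f d) = op d • (f : F)) :
    Function.Bijective u :=
  spectral_multiplication_map_bijective_general 𝒜 ℬ hDinternal hFinternal hmul hsmulR hpart tmul htl
    htr htbal huniv u hu
end
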